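/- arXiv:1607.06072 — 5 statements merged into one kernel-verified Lean document; each statement's English description precedes it below -/
import Mathlib

section
/- There is no injective homomorphism of real Lie algebras from sl(3,ℝ) into su(1,3). -/
open Matrix

attribute [local instance 100] LieRing.ofAssociativeRing

noncomputable section

abbrev M4 : Type := Matrix (Fin 4) (Fin 4) ℂ

/-- The real Lie algebra of `J`-skew-Hermitian traceless complex 4×4 matrices. -/
def suJ (J : M4) : LieSubalgebra ℝ M4 where
  carrier := {X | Xᴴ * J + J * X = 0 ∧ X.trace = 0}
  add_mem' := by
    rintro X Y ⟨hX1, hX2⟩ ⟨hY1, hY2⟩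
    refine ⟨?_, by simp [Matrix.trace_add, hX2, hY2]⟩
    have h : (X + Y)ᴴ * J + J * (X + Y) = (Xᴴ * J + J * X) + (Yᴴ * J + J * Y) := by
      rw [conjTranspose_add]; noncomm_ring
    rw [h, hX1, hY1, add_zero]
  zero_mem' := by simp
  smul_mem' := by
    rintro c X ⟨hX1, hX2⟩
    refine ⟨?_, by simp [hX2]⟩
    have h : (c • X)ᴴ * J + J * (c • X) = c • (Xᴴ * J + J * X) := by
      rw [conjTranspose_smul, star_trivial, smul_mul_assoc, mul_smul_comm, smul_add]
    rw [h, hX1, smul_zero]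
  lie_mem' := by
    rintro X Y ⟨hX1, hX2⟩ ⟨hY1, hY2⟩
    have hX : Xᴴ * J = -(J * X) := eq_neg_of_add_eq_zero_left hX1
    have hY : Yᴴ * J = -(J * Y) := eq_neg_of_add_eq_zero_left hY1
    constructor
    · rw [Ring.lie_def]
      calc (X * Y - Y * X)ᴴ * J + J * (X * Y - Y * X)
          = Yᴴ * (Xᴴ * J) - Xᴴ * (Yᴴ * J) + (J * (X * Y) - J * (Y * X)) := by
            rw [conjTranspose_sub, conjTranspose_mul, conjTranspose_mul]; noncomm_ring
        _ = Yᴴ * (-(J * X)) - Xᴴ * (-(J * Y)) + (J * (X * Y) - J * (Y * X)) := by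
            rw [hX, hY]
        _ = -((Yᴴ * J) * X) + (Xᴴ * J) * Y + (J * (X * Y) - J * (Y * X)) := by
            noncomm_ring
        _ = -((-(J * Y)) * X) + (-(J * X)) * Y + (J * (X * Y) - J * (Y * X)) := by
            rw [hX, hY]
        _ = 0 := by noncomm_ring
    · rw [Ring.lie_def, Matrix.trace_sub, Matrix.trace_mul_comm, sub_self]

/-- `J₁₃ = diag(−1,1,1,1)`. -/
def J13 : M4 := Matrix.diagonal ![-1, 1, 1, 1]

/-- `su(1,3)` as a real Lie subalgebra of the 4×4 complex matrices. -/
def su13 : LieSubalgebra ℝ M4 := suJ J13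

/-- `sl(3,ℝ)`: traceless real 3×3 matrices. -/
def sl3R : LieSubalgebra ℝ (Matrix (Fin 3) (Fin 3) ℝ) where
  carrier := {X | X.trace = 0}
  add_mem' := by
    intro X Y hX hY
    simp only [Set.mem_setOf_eq] at *
    rw [Matrix.trace_add, hX, hY, add_zero]
  zero_mem' := by simp
  smul_mem' := by
    intro c X hX
    simp only [Set.mem_setOf_eq] at *
    rw [Matrix.trace_smul, hX, smul_zero]
  lie_mem' := by
    intro X Y _ _
    simp only [Set.mem_setOf_eq]
    rw [Ring.lie_def, Matrix.trace_sub, Matrix.trace_mul_comm, sub_self]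

open Matrix

lemma pairing_vanish (X : M4) (hX : Xᴴ * J13 + J13 * X = 0) (lam mu : ℂ)
    (hlm : (starRingEnd ℂ) lam + mu ≠ 0) :
    ∀ (m n : ℕ) (u v : Fin 4 → ℂ), ((X - lam • 1) ^ m) *ᵥ u = 0 →
      ((X - mu • 1) ^ n) *ᵥ v = 0 → star u ⬝ᵥ (J13 *ᵥ v) = 0 := by
  have hmat : (X - lam • 1)ᴴ * J13 + J13 * (X - mu • 1)
      = (-((starRingEnd ℂ) lam + mu)) • J13 := by
    have h : Xᴴ * J13 = -(J13 * X) := eq_neg_of_add_eq_zero_left hX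
    simp only [conjTranspose_sub, conjTranspose_smul, conjTranspose_one, sub_mul, mul_sub,
      smul_mul_assoc, mul_smul_comm, one_mul, mul_one, h, RingHom.id_apply, starRingEnd_apply]
    module
  have key : ∀ u v : Fin 4 → ℂ,
      star ((X - lam • 1) *ᵥ u) ⬝ᵥ (J13 *ᵥ v) + star u ⬝ᵥ (J13 *ᵥ ((X - mu • 1) *ᵥ v))
      = (-((starRingEnd ℂ) lam + mu)) * (star u ⬝ᵥ (J13 *ᵥ v)) := by
    intro u v
    have h1 : star ((X - lam • 1) *ᵥ u) ⬝ᵥ (J13 *ᵥ v)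
        = star u ⬝ᵥ (((X - lam • 1)ᴴ * J13) *ᵥ v) := by
      rw [star_mulVec, ← dotProduct_mulVec, mulVec_mulVec]
    have h2 : star u ⬝ᵥ (J13 *ᵥ ((X - mu • 1) *ᵥ v))
        = star u ⬝ᵥ ((J13 * (X - mu • 1)) *ᵥ v) := by rw [mulVec_mulVec]
    rw [h1, h2, ← dotProduct_add, ← add_mulVec, hmat, smul_mulVec,
      dotProduct_smul, smul_eq_mul]
  intro m
  induction m with
  | zero => intro n u v hu _; simp only [pow_zero, one_mulVec] at hu; simp [hu]
  | succ m ihm =>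
    intro n
    induction n with
    | zero => intro u v _ hv; simp only [pow_zero, one_mulVec] at hv; simp [hv]
    | succ n ihn =>
      intro u v hu hv
      have hu' : ((X - lam • 1) ^ m) *ᵥ ((X - lam • 1) *ᵥ u) = 0 := by
        rwa [mulVec_mulVec, ← pow_succ] 
      have hv' : ((X - mu • 1) ^ n) *ᵥ ((X - mu • 1) *ᵥ v) = 0 := by
        rwa [mulVec_mulVec, ← pow_succ]
      have t1 : star ((X - lam • 1) *ᵥ u) ⬝ᵥ (J13 *ᵥ v) = 0 := ihm (n+1) _ _ hu' hv
      have t2 : star u ⬝ᵥ (J13 *ᵥ ((X - mu • 1) *ᵥ v)) = 0 := ihn u _ hu hv'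
      have := key u v
      rw [t1, t2, add_zero] at this
      have h0 := this.symm
      rcases mul_eq_zero.mp h0 with h | h
      · exact absurd (neg_eq_zero.mp h) hlm
      · exact h

lemma isotropic_vec_zero (z : Fin 4 → ℂ) (h0 : z 0 = 0)
    (hz : star z ⬝ᵥ (J13 *ᵥ z) = 0) : z = 0 := by
  have hexp : star z ⬝ᵥ (J13 *ᵥ z)
      = -(star (z 0) * z 0) + star (z 1) * z 1 + star (z 2) * z 2 + star (z 3) * z 3 := by
    simp [J13, dotProduct, mulVec, Fin.sum_univ_four, Matrix.diagonal]
  rw [hexp, h0] at hz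
  simp only [star_zero, mul_zero, zero_mul, neg_zero, zero_add] at hz
  have hn : (Complex.normSq (z 1) : ℂ) + Complex.normSq (z 2) + Complex.normSq (z 3) = 0 := by
    rw [← hz]; simp [Complex.normSq_eq_conj_mul_self, Complex.star_def]
  have hre : Complex.normSq (z 1) + Complex.normSq (z 2) + Complex.normSq (z 3) = 0 := by
    exact_mod_cast hn
  have h1 : Complex.normSq (z 1) = 0 := by nlinarith [Complex.normSq_nonneg (z 1), Complex.normSq_nonneg (z 2), Complex.normSq_nonneg (z 3)]
  have h2 : Complex.normSq (z 2) = 0 := by nlinarith [Complex.normSq_nonneg (z 1), Complex.normSq_nonneg (z 2), Complex.normSq_nonneg (z 3)]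
  have h3 : Complex.normSq (z 3) = 0 := by nlinarith [Complex.normSq_nonneg (z 1), Complex.normSq_nonneg (z 2), Complex.normSq_nonneg (z 3)]
  funext i
  fin_cases i
  · exact h0
  · exact Complex.normSq_eq_zero.mp h1
  · exact Complex.normSq_eq_zero.mp h2
  · exact Complex.normSq_eq_zero.mp h3

lemma no_isotropic_pair (u w : Fin 4 → ℂ) (hu : u ≠ 0) (hindep : ∀ c : ℂ, w ≠ c • u)
    (h11 : star u ⬝ᵥ (J13 *ᵥ u) = 0) (h12 : star u ⬝ᵥ (J13 *ᵥ w) = 0)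
    (h21 : star w ⬝ᵥ (J13 *ᵥ u) = 0) (h22 : star w ⬝ᵥ (J13 *ᵥ w) = 0) : False := by
  by_cases h0 : u 0 = 0
  · exact hu (isotropic_vec_zero u h0 h11)
  · set z : Fin 4 → ℂ := u 0 • w - w 0 • u with hzdef
    have hz0 : z 0 = 0 := by simp [hzdef]; ring
    have hzB : star z ⬝ᵥ (J13 *ᵥ z) = 0 := by
      simp only [hzdef, star_sub, star_smul, mulVec_sub, mulVec_smul, sub_dotProduct,
        dotProduct_sub, smul_dotProduct, dotProduct_smul, smul_eq_mul]
      rw [h11, h12, h21, h22]; ring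
    have hzz : z = 0 := isotropic_vec_zero z hz0 hzB
    have : w = (w 0 * (u 0)⁻¹) • u := by
      have h1 : u 0 • w = w 0 • u := by
        have := sub_eq_zero.mp hzz; exact this
      funext i
      have := congrFun h1 i
      simp only [Pi.smul_apply, smul_eq_mul] at this ⊢
      field_simp
      linear_combination this
    exact hindep _ this

lemma exists_weight_vector (T : Fin 2 → Module.End ℂ (Fin 4 → ℂ)) (hcomm : Commute (T 0) (T 1))
    (Eop : Module.End ℂ (Fin 4 → ℂ)) (hE : Eop ≠ 0) :
    ∃ χ : Fin 2 → ℂ, ∃ v, (∀ i, v ∈ (T i).maxGenEigenspace (χ i)) ∧ Eop v ≠ 0 := by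
  have htop := Module.End.iSup_iInf_maxGenEigenspace_eq_top_of_iSup_maxGenEigenspace_eq_top_of_commute
    T (by
      intro i j hij
      fin_cases i <;> fin_cases j <;> first | exact absurd rfl hij | exact hcomm | exact hcomm.symm)
    (fun i => Module.End.iSup_maxGenEigenspace_eq_top _)
  by_contra hcon
  push_neg at hcon
  apply hE
  refine LinearMap.ext fun v => ?_
  show Eop v = 0
  have hv : v ∈ ⨆ χ : Fin 2 → ℂ, ⨅ i, (T i).maxGenEigenspace (χ i) := by
    rw [htop]; exact Submodule.mem_top
  refine Submodule.iSup_induction (motive := fun x => Eop x = 0) _ hv ?_ (map_zero _) ?_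
  · intro χ x hx
    have hx' : ∀ i, x ∈ (T i).maxGenEigenspace (χ i) := by
      intro i
      exact (Submodule.mem_iInf _).mp hx i
    exact hcon χ x hx'
  · intro x y hx hy; rw [map_add, hx, hy, add_zero]
open Matrix

abbrev E4 := Module.End ℂ (Fin 4 → ℂ)

lemma comm_smul_one (S : E4) (r : ℂ) : Commute S (r • 1) := by
  unfold Commute SemiconjBy
  simp [mul_smul_comm, smul_mul_assoc]

lemma shift_mem {T S : E4} {c a : ℂ} (h : T * S = S * T + c • S)
    {v : Fin 4 → ℂ} (hv : v ∈ T.maxGenEigenspace a) :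
    S v ∈ T.maxGenEigenspace (a + c) := by
  rw [Module.End.mem_maxGenEigenspace] at hv ⊢
  obtain ⟨k, hk⟩ := hv
  refine ⟨k, ?_⟩
  have hsemi : SemiconjBy S (T - a • 1) (T - (a + c) • 1) := by
    unfold SemiconjBy
    have e1 : S * (T - a • 1) = S * T - a • S := by
      rw [mul_sub, mul_smul_comm, mul_one]
    have e2 : (T - (a + c) • 1) * S = S * T + c • S - (a + c) • S := by
      rw [sub_mul, smul_mul_assoc, one_mul, h]
    rw [e1, e2]
    module
  have hp := hsemi.pow_right k
  calc ((T - (a + c) • 1) ^ k) (S v) = (((T - (a + c) • 1) ^ k) * S) v := rfl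
    _ = (S * ((T - a • 1) ^ k)) v := by rw [← hp.eq]
    _ = S (((T - a • 1) ^ k) v) := rfl
    _ = 0 := by rw [hk, map_zero]

lemma comb_mem {T1 T2 : E4} (hc : Commute T1 T2) {a b : ℂ} {v : Fin 4 → ℂ}
    (h1 : v ∈ T1.maxGenEigenspace a) (h2 : v ∈ T2.maxGenEigenspace b) (c1 c2 : ℂ) :
    ∃ k : ℕ, (((c1 • T1 + c2 • T2) - (c1 * a + c2 * b) • 1) ^ k) v = 0 := by
  rw [Module.End.mem_maxGenEigenspace] at h1 h2
  obtain ⟨k1, hk1⟩ := h1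
  obtain ⟨k2, hk2⟩ := h2
  set A : E4 := c1 • (T1 - a • 1) with hA
  set B : E4 := c2 • (T2 - b • 1) with hB
  have h12 : Commute (T1 - a • 1) (T2 - b • 1) := by
    have d1 : Commute T1 (T2 - b • 1) := hc.sub_right (comm_smul_one T1 b)
    have d2 : Commute (a • 1) (T2 - b • 1) := (comm_smul_one (T2 - b • 1) a).symm
    exact d1.sub_left d2
  have hAB : Commute A B := by
    unfold Commute SemiconjBy
    rw [hA, hB, smul_mul_assoc, mul_smul_comm, smul_mul_assoc, mul_smul_comm, h12.eq, smul_comm]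
  have key : (c1 • T1 + c2 • T2) - (c1 * a + c2 * b) • 1 = A + B := by
    rw [hA, hB, smul_sub, smul_sub, smul_smul, smul_smul]
    module
  refine ⟨k1 + k2, ?_⟩
  rw [key, hAB.add_pow]
  rw [LinearMap.coe_sum, Finset.sum_apply]
  refine Finset.sum_eq_zero fun m hm => ?_
  have hA0 : ∀ t : ℕ, (A ^ (t + k1)) v = 0 := by
    intro t
    rw [hA, smul_pow, LinearMap.smul_apply]
    have e : ((T1 - a • 1) ^ (t + k1)) v = ((T1 - a•1)^t) (((T1 - a•1)^k1) v) := by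
      rw [pow_add]; rfl
    rw [e, hk1, map_zero, smul_zero]
  have hB0 : ∀ t : ℕ, (B ^ (t + k2)) v = 0 := by
    intro t
    rw [hB, smul_pow, LinearMap.smul_apply]
    have e : ((T2 - b • 1) ^ (t + k2)) v = ((T2 - b•1)^t) (((T2 - b•1)^k2) v) := by
      rw [pow_add]; rfl
    rw [e, hk2, map_zero, smul_zero]
  set c : ℕ := (k1 + k2).choose m with hcdef
  have hmem := Finset.mem_range.mp hm
  have hcast : ((c : E4)) v = c • v := by simp
  by_cases hcase : k2 ≤ k1 + k2 - m
  · obtain ⟨t, ht⟩ : ∃ t, k1 + k2 - m = t + k2 := ⟨k1 + k2 - m - k2, by omega⟩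
    show (A ^ m) ((B ^ (k1 + k2 - m)) ((c : E4) v)) = 0
    rw [hcast, map_nsmul, ht, hB0 t, smul_zero, map_zero]
  · obtain ⟨t, ht⟩ : ∃ t, m = t + k1 := ⟨m - k1, by omega⟩
    rw [(hAB.pow_pow m (k1 + k2 - m)).eq]
    show (B ^ (k1 + k2 - m)) ((A ^ m) ((c : E4) v)) = 0
    rw [hcast, map_nsmul, ht, hA0 t, smul_zero, map_zero]

lemma plane_case (x y a0 a1 : ℝ) (ha : ¬(a0 = 0 ∧ a1 = 0)) :
    (∃ c1 c2 : ℝ, 0 < c1*x + c2*y ∧ 0 < c1*(x+a0) + c2*(y+a1)) ∨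
    (∃ s : ℝ, s ≠ 0 ∧ ((x = s*a0 ∧ y = s*a1) ∨ (x + a0 = s*a0 ∧ y + a1 = s*a1))) := by
  by_cases hcross : x*a1 - y*a0 = 0
  · right
    have hden : 0 < a0^2 + a1^2 := by
      rcases not_and_or.mp ha with h | h <;> positivity
    set s : ℝ := (x*a0 + y*a1)/(a0^2+a1^2) with hs
    have hx : x = s*a0 := by
      rw [hs, div_mul_eq_mul_div, eq_div_iff hden.ne']
      linear_combination a1 * hcross
    have hy : y = s*a1 := by
      rw [hs, div_mul_eq_mul_div, eq_div_iff hden.ne']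
      linear_combination (-a0) * hcross
    by_cases hs0 : s = 0
    · refine ⟨1, one_ne_zero, Or.inr ?_⟩
      rw [hx, hy, hs0]
      constructor <;> ring
    · exact ⟨s, hs0, Or.inl ⟨hx, hy⟩⟩
  · left
    refine ⟨a1 / (x*a1 - y*a0), -a0 / (x*a1 - y*a0), ?_, ?_⟩
    · have : a1 / (x*a1 - y*a0) * x + -a0 / (x*a1 - y*a0) * y = 1 := by
        rw [div_mul_eq_mul_div, div_mul_eq_mul_div, ← add_div, div_eq_one_iff_eq hcross]
        ring
      rw [this]; norm_num
    · have : a1 / (x*a1 - y*a0) * (x+a0) + -a0 / (x*a1 - y*a0) * (y+a1) = 1 := by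
        rw [div_mul_eq_mul_div, div_mul_eq_mul_div, ← add_div, div_eq_one_iff_eq hcross]
        ring
      rw [this]; norm_num

lemma endpow_apply (X : M4) (a : ℂ) (k : ℕ) (v : Fin 4 → ℂ) :
    ((Matrix.toLinAlgEquiv' X - a • 1) ^ k) v = ((X - a • (1:M4)) ^ k) *ᵥ v := by
  have h : Matrix.toLinAlgEquiv' ((X - a • (1:M4)) ^ k)
      = (Matrix.toLinAlgEquiv' X - a • 1) ^ k := by
    rw [map_pow, map_sub, _root_.map_smul, _root_.map_one]
  rw [← h, Matrix.toLinAlgEquiv'_apply]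

theorem master (H1 H2 E F : M4)
    (hH1 : H1ᴴ * J13 + J13 * H1 = 0) (hH2 : H2ᴴ * J13 + J13 * H2 = 0)
    (hHH : H1 * H2 = H2 * H1)
    (hE1 : H1 * E = E * H1 + (E + E)) (hE2 : H2 * E = E * H2 + (-E))
    (hF1 : H1 * F = F * H1 + (-F)) (hF2 : H2 * F = F * H2 + (F + F))
    (hEne : E ≠ 0) (hFne : F ≠ 0) : False := by
  set φ := (Matrix.toLinAlgEquiv' : M4 ≃ₐ[ℂ] E4) with hφ
  set T : Fin 2 → E4 := ![φ H1, φ H2] with hT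
  have hT0 : T 0 = φ H1 := rfl
  have hT1 : T 1 = φ H2 := rfl
  have hcommT : Commute (T 0) (T 1) := by
    rw [hT0, hT1]
    unfold Commute SemiconjBy
    rw [← _root_.map_mul, ← _root_.map_mul, hHH]
  have PAIR : ∀ (χ χ' : Fin 2 → ℂ) (u w : Fin 4 → ℂ), χ ≠ χ' → u ≠ 0 → w ≠ 0 →
      (∀ i, u ∈ Module.End.maxGenEigenspace (T i) (χ i)) →
      (∀ i, w ∈ Module.End.maxGenEigenspace (T i) (χ' i)) →
      ∀ c1 c2 : ℝ, 0 < c1 * (χ 0).re + c2 * (χ 1).re →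
        0 < c1 * (χ' 0).re + c2 * (χ' 1).re → False := by
    intro χ χ' u w hne hu0 hw0 hu hw c1 c2 hpos hpos'
    set X : M4 := (c1:ℂ) • H1 + (c2:ℂ) • H2 with hXdef
    have hXc : Xᴴ = (c1:ℂ) • H1ᴴ + (c2:ℂ) • H2ᴴ := by
      rw [hXdef, conjTranspose_add, conjTranspose_smul, conjTranspose_smul,
        Complex.star_def, Complex.conj_ofReal, Complex.conj_ofReal]
    have hX : Xᴴ * J13 + J13 * X = 0 := by
      rw [hXc, hXdef, add_mul, mul_add, smul_mul_assoc, smul_mul_assoc, mul_smul_comm,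
        mul_smul_comm, eq_neg_of_add_eq_zero_left hH1, eq_neg_of_add_eq_zero_left hH2]
      module
    set lam : ℂ := (c1:ℂ) * χ 0 + (c2:ℂ) * χ 1 with hlam
    set mu : ℂ := (c1:ℂ) * χ' 0 + (c2:ℂ) * χ' 1 with hmu
    have hXφ : φ X = (c1:ℂ) • (T 0) + (c2:ℂ) • (T 1) := by
      rw [hXdef, map_add, _root_.map_smul, _root_.map_smul, hT0, hT1]
    have hukey : ∃ k : ℕ, ((X - lam • 1) ^ k) *ᵥ u = 0 := by
      obtain ⟨k, hk⟩ := comb_mem hcommT (hu 0) (hu 1) (c1:ℂ) (c2:ℂ)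
      refine ⟨k, ?_⟩
      rw [← endpow_apply, hXφ]
      exact hk
    have hwkey : ∃ k : ℕ, ((X - mu • 1) ^ k) *ᵥ w = 0 := by
      obtain ⟨k, hk⟩ := comb_mem hcommT (hw 0) (hw 1) (c1:ℂ) (c2:ℂ)
      refine ⟨k, ?_⟩
      rw [← endpow_apply, hXφ]
      exact hk
    obtain ⟨m, hm⟩ := hukey
    obtain ⟨n, hn⟩ := hwkey
    have hrelam : lam.re = c1 * (χ 0).re + c2 * (χ 1).re := by
      rw [hlam]
      simp [Complex.add_re, Complex.re_ofReal_mul]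
    have hremu : mu.re = c1 * (χ' 0).re + c2 * (χ' 1).re := by
      rw [hmu]
      simp [Complex.add_re, Complex.re_ofReal_mul]
    have hkey : ∀ α β : ℂ, 0 < α.re → 0 < β.re → (starRingEnd ℂ) α + β ≠ 0 := by
      intro α β hα hβ h
      have := congrArg Complex.re h
      simp only [Complex.add_re, Complex.conj_re, Complex.zero_re] at this
      linarith
    have hplam : 0 < lam.re := by rw [hrelam]; exact hpos
    have hpmu : 0 < mu.re := by rw [hremu]; exact hpos'
    have h11 := pairing_vanish X hX lam lam (hkey _ _ hplam hplam) m m u u hm hm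
    have h12 := pairing_vanish X hX lam mu (hkey _ _ hplam hpmu) m n u w hm hn
    have h21 := pairing_vanish X hX mu lam (hkey _ _ hpmu hplam) n m w u hn hm
    have h22 := pairing_vanish X hX mu mu (hkey _ _ hpmu hpmu) n n w w hn hn
    have hindep : ∀ cc : ℂ, w ≠ cc • u := by
      intro cc hwc
      have hcc : cc ≠ 0 := by
        rintro rfl
        rw [zero_smul] at hwc
        exact hw0 hwc
      have huw : u = cc⁻¹ • w := by
        rw [hwc, smul_smul, inv_mul_cancel₀ hcc, one_smul]
      have hmem1 : u ∈ ⨅ i, Module.End.maxGenEigenspace (T i) (χ i) :=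
        (Submodule.mem_iInf _).mpr hu
      have hmem2 : u ∈ ⨅ i, Module.End.maxGenEigenspace (T i) (χ' i) := by
        rw [huw]
        exact Submodule.smul_mem _ _ ((Submodule.mem_iInf _).mpr hw)
      have hdisj := Module.End.disjoint_iInf_maxGenEigenspace T hne
      have hb : u ∈ (⊥ : Submodule ℂ (Fin 4 → ℂ)) := hdisj.le_bot ⟨hmem1, hmem2⟩
      exact hu0 ((Submodule.mem_bot ℂ).mp hb)
    exact no_isotropic_pair u w hu0 hindep h11 h12 h21 h22
  have SIDE : ∀ (d0 d1 : ℝ), ¬(d0 = 0 ∧ d1 = 0) → ∀ (Eop : E4), Eop ≠ 0 →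
      (T 0 * Eop = Eop * T 0 + ((d0 : ℂ)) • Eop) →
      (T 1 * Eop = Eop * T 1 + ((d1 : ℂ)) • Eop) →
      ∃ (ψ : Fin 2 → ℂ) (z : Fin 4 → ℂ) (s : ℝ), s ≠ 0 ∧ z ≠ 0 ∧
        (∀ i, z ∈ Module.End.maxGenEigenspace (T i) (ψ i)) ∧
        (ψ 0).re = s * d0 ∧ (ψ 1).re = s * d1 := by
    intro d0 d1 hd Eop hEop hrel0 hrel1
    obtain ⟨χ, v, hv, hEv⟩ := exists_weight_vector T hcommT Eop hEop
    have hv0 : v ≠ 0 := fun h => hEv (by rw [h, map_zero])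
    set χ' : Fin 2 → ℂ := ![χ 0 + (d0:ℂ), χ 1 + (d1:ℂ)] with hχ'
    have hw : ∀ i, Eop v ∈ Module.End.maxGenEigenspace (T i) (χ' i) := by
      intro i
      fin_cases i
      · simpa [hχ'] using shift_mem hrel0 (hv 0)
      · simpa [hχ'] using shift_mem hrel1 (hv 1)
    have hχne : χ ≠ χ' := by
      intro h
      have h0 := congrFun h 0
      have h1 := congrFun h 1
      rw [hχ'] at h0 h1
      simp only [Matrix.cons_val_zero, Matrix.cons_val_one, Matrix.head_cons,
        left_eq_add, Complex.ofReal_eq_zero] at h0 h1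
      exact hd ⟨h0, h1⟩
    have hre0' : (χ' 0).re = (χ 0).re + d0 := by
      rw [hχ']
      simp [Complex.add_re, Complex.ofReal_re]
    have hre1' : (χ' 1).re = (χ 1).re + d1 := by
      rw [hχ']
      simp [Complex.add_re, Complex.ofReal_re]
    rcases plane_case (χ 0).re (χ 1).re d0 d1 hd with ⟨c1, c2, hp1, hp2⟩ | ⟨s, hs, hcase⟩
    · exfalso
      apply PAIR χ χ' v (Eop v) hχne hv0 hEv hv hw c1 c2 hp1
      rw [hre0', hre1']
      exact hp2
    · rcases hcase with ⟨hx, hy⟩ | ⟨hx, hy⟩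
      · exact ⟨χ, v, s, hs, hv0, hv, hx, hy⟩
      · refine ⟨χ', Eop v, s, hs, hEv, hw, ?_, ?_⟩
        · rw [hre0']; exact hx
        · rw [hre1']; exact hy
  have hEφ : φ E ≠ 0 := by
    intro h
    exact hEne (by simpa using φ.injective (h.trans (map_zero φ).symm))
  have hFφ : φ F ≠ 0 := by
    intro h
    exact hFne (by simpa using φ.injective (h.trans (map_zero φ).symm))
  have rel1 : T 0 * φ E = φ E * T 0 + (((2:ℝ)):ℂ) • (φ E) := by
    rw [hT0, ← _root_.map_mul, hE1, map_add, _root_.map_mul]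
    congr 1
    rw [map_add]
    norm_num [two_smul]
  have rel2 : T 1 * φ E = φ E * T 1 + (((-1:ℝ)):ℂ) • (φ E) := by
    rw [hT1, ← _root_.map_mul, hE2, map_add, _root_.map_mul]
    congr 1
    rw [map_neg]
    push_cast
    module
  have rel1' : T 0 * φ F = φ F * T 0 + (((-1:ℝ)):ℂ) • (φ F) := by
    rw [hT0, ← _root_.map_mul, hF1, map_add, _root_.map_mul]
    congr 1
    rw [map_neg]
    push_cast
    module
  have rel2' : T 1 * φ F = φ F * T 1 + (((2:ℝ)):ℂ) • (φ F) := by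
    rw [hT1, ← _root_.map_mul, hF2, map_add, _root_.map_mul]
    congr 1
    rw [map_add]
    norm_num [two_smul]
  obtain ⟨ψ, z, s, hs, hz, hmem, hre0, hre1⟩ :=
    SIDE 2 (-1) (by norm_num) (φ E) hEφ rel1 rel2
  obtain ⟨ψ', z', s', hs', hz', hmem', hre0', hre1'⟩ :=
    SIDE (-1) 2 (by norm_num) (φ F) hFφ rel1' rel2'
  have hneψ : ψ ≠ ψ' := by
    intro h
    rw [h] at hre0 hre1
    rw [hre0'] at hre0
    rw [hre1'] at hre1
    have : s = 0 := by linarith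
    exact hs this
  apply PAIR ψ ψ' z z' hneψ hz hz' hmem hmem' ((2*s + s')/3) ((s + 2*s')/3)
  · rw [hre0, hre1]
    have he : (2*s + s')/3 * (s * 2) + (s + 2*s')/3 * (s * (-1)) = s * s := by ring
    rw [he]
    exact mul_self_pos.mpr hs
  · rw [hre0', hre1']
    have he : (2*s + s')/3 * (s' * (-1)) + (s + 2*s')/3 * (s' * 2) = s' * s' := by ring
    rw [he]
    exact mul_self_pos.mpr hs'

/-- There is no injective homomorphism of real Lie algebras from `sl(3,ℝ)` into `su(1,3)`. -/
theorem no_injective_hom_sl3R_su13 :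
    ¬ ∃ f : sl3R →ₗ⁅ℝ⁆ su13, Function.Injective f := by
  rintro ⟨f, hf⟩
  have mem3 : ∀ m : Matrix (Fin 3) (Fin 3) ℝ, m.trace = 0 → m ∈ sl3R := fun _ h => h
  set x1 : sl3R := ⟨!![1,0,0;0,-1,0;0,0,0], mem3 _ (by
    norm_num [Matrix.trace, Matrix.diag, Fin.sum_univ_three, Matrix.vecHead, Matrix.vecTail, Matrix.cons_val_two])⟩
    with hx1
  set x2 : sl3R := ⟨!![0,0,0;0,1,0;0,0,-1], mem3 _ (by
    norm_num [Matrix.trace, Matrix.diag, Fin.sum_univ_three, Matrix.vecHead, Matrix.vecTail, Matrix.cons_val_two])⟩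
    with hx2
  set xe : sl3R := ⟨!![0,1,0;0,0,0;0,0,0], mem3 _ (by
    norm_num [Matrix.trace, Matrix.diag, Fin.sum_univ_three, Matrix.vecHead, Matrix.vecTail, Matrix.cons_val_two])⟩
    with hxe
  set xf : sl3R := ⟨!![0,0,0;0,0,1;0,0,0], mem3 _ (by
    norm_num [Matrix.trace, Matrix.diag, Fin.sum_univ_three, Matrix.vecHead, Matrix.vecTail, Matrix.cons_val_two])⟩
    with hxf
  have hbr : ∀ x y z : sl3R,
      ((x : Matrix (Fin 3) (Fin 3) ℝ) * y - (y : Matrix (Fin 3) (Fin 3) ℝ) * x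
        = (z : Matrix (Fin 3) (Fin 3) ℝ)) → ⁅x, y⁆ = z := by
    intro x y z h
    apply Subtype.ext
    rw [LieSubalgebra.coe_bracket, Ring.lie_def, h]
  have b0 : ⁅x1, x2⁆ = 0 := by
    apply hbr
    rw [hx1, hx2]
    ext i j
    fin_cases i <;> fin_cases j <;>
      norm_num [Matrix.mul_apply, Fin.sum_univ_three]
  have b1 : ⁅x1, xe⁆ = xe + xe := by
    apply hbr
    rw [hx1, hxe]
    show _ = (!![0,1,0;0,0,0;0,0,0] : Matrix (Fin 3) (Fin 3) ℝ) + !![0,1,0;0,0,0;0,0,0]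
    ext i j
    fin_cases i <;> fin_cases j <;>
      norm_num [Matrix.mul_apply, Fin.sum_univ_three]
  have b2 : ⁅x2, xe⁆ = -xe := by
    apply hbr
    rw [hx2, hxe]
    show _ = -(!![0,1,0;0,0,0;0,0,0] : Matrix (Fin 3) (Fin 3) ℝ)
    ext i j
    fin_cases i <;> fin_cases j <;>
      norm_num [Matrix.mul_apply, Fin.sum_univ_three]
  have b3 : ⁅x1, xf⁆ = -xf := by
    apply hbr
    rw [hx1, hxf]
    show _ = -(!![0,0,0;0,0,1;0,0,0] : Matrix (Fin 3) (Fin 3) ℝ)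
    ext i j
    fin_cases i <;> fin_cases j <;>
      norm_num [Matrix.mul_apply, Fin.sum_univ_three]
  have b4 : ⁅x2, xf⁆ = xf + xf := by
    apply hbr
    rw [hx2, hxf]
    show _ = (!![0,0,0;0,0,1;0,0,0] : Matrix (Fin 3) (Fin 3) ℝ) + !![0,0,0;0,0,1;0,0,0]
    ext i j
    fin_cases i <;> fin_cases j <;>
      norm_num [Matrix.mul_apply, Fin.sum_univ_three]
  set H1 : M4 := ((f x1 : su13) : M4) with hH1def
  set H2 : M4 := ((f x2 : su13) : M4) with hH2def
  set E : M4 := ((f xe : su13) : M4) with hEdef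
  set F : M4 := ((f xf : su13) : M4) with hFdef
  have coebr : ∀ (a b : su13), ((⁅a, b⁆ : su13) : M4) = (a : M4) * b - (b : M4) * a := by
    intro a b
    rw [LieSubalgebra.coe_bracket, Ring.lie_def]
  have hHH : H1 * H2 = H2 * H1 := by
    have h := congrArg (fun y : su13 => (y : M4)) (by rw [← LieHom.map_lie, b0, map_zero f] :
      (⁅f x1, f x2⁆ : su13) = 0)
    simp only [coebr] at h
    exact sub_eq_zero.mp (by rw [← hH1def, ← hH2def] at h; exact h.trans rfl)
  have hE1 : H1 * E = E * H1 + (E + E) := by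
    have h := congrArg (fun y : su13 => (y : M4)) (by rw [← LieHom.map_lie, b1, map_add f] :
      (⁅f x1, f xe⁆ : su13) = f xe + f xe)
    simp only [coebr, AddMemClass.coe_add] at h
    rw [← hH1def, ← hEdef] at h
    exact sub_eq_iff_eq_add'.mp h
  have hE2 : H2 * E = E * H2 + (-E) := by
    have h := congrArg (fun y : su13 => (y : M4)) (by rw [← LieHom.map_lie, b2, map_neg f] :
      (⁅f x2, f xe⁆ : su13) = -(f xe))
    simp only [coebr, NegMemClass.coe_neg] at h
    rw [← hH2def, ← hEdef] at h
    exact sub_eq_iff_eq_add'.mp h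
  have hF1 : H1 * F = F * H1 + (-F) := by
    have h := congrArg (fun y : su13 => (y : M4)) (by rw [← LieHom.map_lie, b3, map_neg f] :
      (⁅f x1, f xf⁆ : su13) = -(f xf))
    simp only [coebr, NegMemClass.coe_neg] at h
    rw [← hH1def, ← hFdef] at h
    exact sub_eq_iff_eq_add'.mp h
  have hF2 : H2 * F = F * H2 + (F + F) := by
    have h := congrArg (fun y : su13 => (y : M4)) (by rw [← LieHom.map_lie, b4, map_add f] :
      (⁅f x2, f xf⁆ : su13) = f xf + f xf)
    simp only [coebr, AddMemClass.coe_add] at h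
    rw [← hH2def, ← hFdef] at h
    exact sub_eq_iff_eq_add'.mp h
  have hEne : E ≠ 0 := by
    intro h
    have hz : f xe = 0 := ZeroMemClass.coe_eq_zero.mp (hEdef ▸ h)
    have hx : xe = 0 := hf (by rw [hz, map_zero f])
    have hco := congrArg (fun m : sl3R => (m : Matrix (Fin 3) (Fin 3) ℝ) 0 1) hx
    rw [hxe] at hco
    norm_num at hco
  have hFne : F ≠ 0 := by
    intro h
    have hz : f xf = 0 := ZeroMemClass.coe_eq_zero.mp (hFdef ▸ h)
    have hx : xf = 0 := hf (by rw [hz, map_zero f])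
    have hco := congrArg (fun m : sl3R => (m : Matrix (Fin 3) (Fin 3) ℝ) 1 2) hx
    rw [hxf] at hco
    norm_num [Matrix.cons_val_two] at hco
  exact master H1 H2 E F (f x1).2.1 (f x2).2.1 hHH hE1 hE2 hF1 hF2 hEne hFne

end
end

section
/- There is no injective homomorphism of real Lie algebras from sp(4,ℝ) into su(1,3). -/
open Matrix

attribute [local instance 100] LieRing.ofAssociativeRing

noncomputable section

/-- The standard symplectic matrix `Ω = [[0, I₂], [−I₂, 0]]`. -/
def Omega : Matrix (Fin 4) (Fin 4) ℝ :=
  !![0, 0, 1, 0; 0, 0, 0, 1; -1, 0, 0, 0; 0, -1, 0, 0]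

/-- `sp(4,ℝ) = {X : XᵀΩ + ΩX = 0}` as a real Lie subalgebra of the 4×4 real matrices. -/
def sp4 : LieSubalgebra ℝ (Matrix (Fin 4) (Fin 4) ℝ) where
  carrier := {X | Xᵀ * Omega + Omega * X = 0}
  add_mem' := by
    intro X Y hX hY
    simp only [Set.mem_setOf_eq] at *
    have h : (X + Y)ᵀ * Omega + Omega * (X + Y)
        = (Xᵀ * Omega + Omega * X) + (Yᵀ * Omega + Omega * Y) := by
      rw [transpose_add]; noncomm_ring
    rw [h, hX, hY, add_zero]
  zero_mem' := by simp
  smul_mem' := by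
    intro c X hX
    simp only [Set.mem_setOf_eq] at *
    have h : (c • X)ᵀ * Omega + Omega * (c • X) = c • (Xᵀ * Omega + Omega * X) := by
      rw [transpose_smul, smul_mul_assoc, mul_smul_comm, smul_add]
    rw [h, hX, smul_zero]
  lie_mem' := by
    intro X Y hX1 hY1
    simp only [Set.mem_setOf_eq] at *
    have hX : Xᵀ * Omega = -(Omega * X) := eq_neg_of_add_eq_zero_left hX1
    have hY : Yᵀ * Omega = -(Omega * Y) := eq_neg_of_add_eq_zero_left hY1
    rw [Ring.lie_def]
    calc (X * Y - Y * X)ᵀ * Omega + Omega * (X * Y - Y * X)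
        = Yᵀ * (Xᵀ * Omega) - Xᵀ * (Yᵀ * Omega) + (Omega * (X * Y) - Omega * (Y * X)) := by
          rw [transpose_sub, transpose_mul, transpose_mul]; noncomm_ring
      _ = Yᵀ * (-(Omega * X)) - Xᵀ * (-(Omega * Y)) + (Omega * (X * Y) - Omega * (Y * X)) := by
          rw [hX, hY]
      _ = -((Yᵀ * Omega) * X) + (Xᵀ * Omega) * Y + (Omega * (X * Y) - Omega * (Y * X)) := by
          noncomm_ring
      _ = -((-(Omega * Y)) * X) + (-(Omega * X)) * Y + (Omega * (X * Y) - Omega * (Y * X)) := by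
          rw [hX, hY]
      _ = 0 := by noncomm_ring


/-!
`su(1,3)` has real rank one, `sp(4,ℝ)` real rank two. Concretely, a `J₁₃`-skew matrix `X`
makes its generalized eigenspaces for eigenvalues `a`, `b` orthogonal for the form
`⟨v, w⟩ = v* J₁₃ w` as soon as `conj a + b ≠ 0`; so the generalized eigenvectors of `X` for
eigenvalues with positive real part span a totally isotropic subspace, which for the signature
`(1,3)` is at most a line.

In `sp(4,ℝ)` there are commuting `h₁, h₂` and nonzero `e₁, e₂` with `[hᵢ, eⱼ] = 2 δᵢⱼ eⱼ`. If
`A₁, A₂, B₁` are their images in `su(1,3)`, a joint generalized eigenvector `v` of the `Aᵢ` with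
`B₁ v ≠ 0` yields two independent joint generalized eigenvectors `v`, `B₁ v` whose `A₁`-eigenvalues
differ by `2` and whose `A₂`-eigenvalues agree; applying the above to `±A₂` forces the real part of
the common `A₂`-eigenvalue to vanish. This produces a joint generalized eigenvector whose
eigenvalues have real parts `(p, 0)` with `p ≠ 0`, and symmetrically one with real parts `(0, q)`,
`q ≠ 0`; both then have eigenvalues with positive real part for `p A₁ + q A₂`, a contradiction.
-/

open Module Module.End

theorem sesq_eq_zero_of_mem_maxGenEigenspace {M : Type*} [AddCommGroup M] [Module ℂ M]
    (B : M →ₗ⋆[ℂ] M →ₗ[ℂ] ℂ) {f : End ℂ M} (hf : ∀ v w, B (f v) w + B v (f w) = 0)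
    {a b : ℂ} (hab : star a + b ≠ 0) {v w : M} (hv : v ∈ f.maxGenEigenspace a)
    (hw : w ∈ f.maxGenEigenspace b) : B v w = 0 := by
  obtain ⟨m, hm⟩ := (f.mem_maxGenEigenspace a v).mp hv
  obtain ⟨n, hn⟩ := (f.mem_maxGenEigenspace b w).mp hw
  clear hv hw
  induction m generalizing v n w with
  | zero => simp_all
  | succ m ihm =>
    induction n generalizing w with
    | zero => simp_all
    | succ n ihn =>
      have hshift : B ((f - a • 1) v) w + B v ((f - b • 1) w) = -(star a + b) * B v w := by
        simp only [LinearMap.sub_apply, LinearMap.smul_apply, Module.End.one_apply, map_sub,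
          map_smulₛₗ, starRingEnd_apply, smul_eq_mul]
        linear_combination hf v w
      have h₁ : B ((f - a • 1) v) w = 0 := ihm (by rwa [← Module.End.mul_apply, ← pow_succ]) _ hn
      have h₂ : B v ((f - b • 1) w) = 0 := ihn (by rwa [← Module.End.mul_apply, ← pow_succ])
      rw [h₁, h₂, add_zero, eq_comm, mul_eq_zero, neg_eq_zero] at hshift
      exact hshift.resolve_left hab

namespace Module.End

variable {R M : Type*} [CommRing R] [AddCommGroup M] [Module R M]

theorem mapsTo_maxGenEigenspace_add_of_lie_eq_smul {f g : End R M} {c : R} (h : ⁅f, g⁆ = c • g)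
    (μ : R) : Set.MapsTo g (f.maxGenEigenspace μ) (f.maxGenEigenspace (μ + c)) := by
  have hsemi : SemiconjBy g (f - μ • 1) (f - (μ + c) • 1) := by
    rw [Ring.lie_def, sub_eq_iff_eq_add] at h
    rw [SemiconjBy, mul_sub, sub_mul, h, mul_smul_comm, smul_mul_assoc, mul_one, one_mul, add_smul]
    abel
  intro v hv
  obtain ⟨k, hk⟩ := (f.mem_maxGenEigenspace μ v).mp hv
  refine (f.mem_maxGenEigenspace _ _).mpr ⟨k, ?_⟩
  rw [← mul_apply, ← (hsemi.pow_right k).eq, mul_apply, hk, map_zero]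

theorem mem_maxGenEigenspace_smul_add_smul {f g : End R M} (hfg : Commute f g) {α β : R} {v : M}
    (hv : v ∈ f.maxGenEigenspace α ⊓ g.maxGenEigenspace β) (s t : R) :
    v ∈ (s • f + t • g).maxGenEigenspace (s * α + t * β) :=
  genEigenspace_inf_le_add _ _ _ _ ⊤ ⊤ ((hfg.smul_left s).smul_right t)
    ⟨genEigenspace_le_smul f α s ⊤ hv.1, genEigenspace_le_smul g β t ⊤ hv.2⟩

variable {K V : Type*} [Field K] [IsAlgClosed K] [AddCommGroup V] [Module K V]
  [FiniteDimensional K V]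

theorem exists_mem_maxGenEigenspace_inf_apply_ne_zero {f₁ f₂ g : End K V} (hf : Commute f₁ f₂)
    (hg : g ≠ 0) : ∃ α β, ∃ v ∈ f₁.maxGenEigenspace α ⊓ f₂.maxGenEigenspace β, g v ≠ 0 := by
  by_contra! h
  apply hg
  let F : Fin 2 → End K V := ![f₁, f₂]
  have hF : Pairwise fun i j ↦ Commute (F i) (F j) := by
    intro i j _
    fin_cases i <;> fin_cases j
    exacts [Commute.refl _, hf, hf.symm, Commute.refl _]
  have hspan := iSup_iInf_maxGenEigenspace_eq_top_of_iSup_maxGenEigenspace_eq_top_of_commute F hF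
    fun i ↦ iSup_maxGenEigenspace_eq_top (F i)
  rw [← LinearMap.ker_eq_top, eq_top_iff, ← hspan, iSup_le_iff]
  intro χ v hv
  exact h (χ 0) (χ 1) v ⟨(Submodule.mem_iInf _).mp hv 0, (Submodule.mem_iInf _).mp hv 1⟩

theorem exists_mem_maxGenEigenspace_inf_of_lie_eq_smul {f₁ f₂ g : End K V} (hf : Commute f₁ f₂)
    {c : K} (h₁ : ⁅f₁, g⁆ = c • g) (h₂ : Commute f₂ g) (hg : g ≠ 0) :
    ∃ α β, ∃ v ∈ f₁.maxGenEigenspace α ⊓ f₂.maxGenEigenspace β,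
      g v ∈ f₁.maxGenEigenspace (α + c) ⊓ f₂.maxGenEigenspace β ∧ g v ≠ 0 := by
  obtain ⟨α, β, v, hv, hgv⟩ := exists_mem_maxGenEigenspace_inf_apply_ne_zero hf hg
  exact ⟨α, β, v, hv, ⟨mapsTo_maxGenEigenspace_add_of_lie_eq_smul h₁ α hv.1,
    mapsTo_maxGenEigenspace_of_comm h₂ β hv.2⟩, hgv⟩

end Module.End

section HermForm

variable {n : Type*} [Fintype n] [DecidableEq n]

def hermForm (J : Matrix n n ℂ) : (n → ℂ) →ₗ⋆[ℂ] (n → ℂ) →ₗ[ℂ] ℂ :=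
  Matrix.toLinearMapₛₗ₂' ℂ (starRingEnd ℂ) (RingHom.id ℂ) J

theorem hermForm_apply (J : Matrix n n ℂ) (v w : n → ℂ) :
    hermForm J v w = star v ⬝ᵥ (J *ᵥ w) := by
  rw [hermForm, Matrix.toLinearMapₛₗ₂'_apply]
  simp only [dotProduct, mulVec, Finset.mul_sum, Pi.star_apply, RingHom.id_apply, smul_eq_mul,
    starRingEnd_apply]
  exact Finset.sum_congr rfl fun _ _ ↦ Finset.sum_congr rfl fun _ _ ↦ by ring

theorem hermForm_toLin'_add_eq_zero {J X : Matrix n n ℂ} (hX : Xᴴ * J + J * X = 0)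
    (v w : n → ℂ) : hermForm J (toLin' X v) w + hermForm J v (toLin' X w) = 0 := by
  rw [hermForm_apply, hermForm_apply, toLin'_apply, toLin'_apply, star_mulVec, dotProduct_mulVec,
    vecMul_vecMul, ← dotProduct_mulVec, mulVec_mulVec, ← dotProduct_add, ← add_mulVec, hX,
    zero_mulVec, dotProduct_zero]

end HermForm

theorem re_hermForm_J13_self (u : Fin 4 → ℂ) :
    (hermForm J13 u u).re = -Complex.normSq (u 0) + Complex.normSq (u 1) +
      Complex.normSq (u 2) + Complex.normSq (u 3) := by
  simp [hermForm_apply, J13, dotProduct, mulVec_diagonal, Fin.sum_univ_four, Complex.normSq_apply]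

theorem eq_zero_of_hermForm_J13_self_eq_zero {u : Fin 4 → ℂ} (h0 : u 0 = 0)
    (hu : hermForm J13 u u = 0) : u = 0 := by
  have hsum := re_hermForm_J13_self u
  rw [hu, h0, Complex.zero_re, map_zero, neg_zero, zero_add] at hsum
  have n1 := Complex.normSq_nonneg (u 1)
  have n2 := Complex.normSq_nonneg (u 2)
  have n3 := Complex.normSq_nonneg (u 3)
  have h1 : u 1 = 0 := Complex.normSq_eq_zero.mp (by linarith)
  have h2 : u 2 = 0 := Complex.normSq_eq_zero.mp (by linarith)
  have h3 : u 3 = 0 := Complex.normSq_eq_zero.mp (by linarith)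
  ext i
  fin_cases i <;> assumption

theorem exists_eq_smul_of_hermForm_J13_eq_zero {v w : Fin 4 → ℂ} (hv : v ≠ 0)
    (hvv : hermForm J13 v v = 0) (hvw : hermForm J13 v w = 0) (hwv : hermForm J13 w v = 0)
    (hww : hermForm J13 w w = 0) : ∃ c : ℂ, w = c • v := by
  have hv0 : v 0 ≠ 0 := fun h ↦ hv (eq_zero_of_hermForm_J13_self_eq_zero h hvv)
  have hu : w 0 • v - v 0 • w = 0 := by
    apply eq_zero_of_hermForm_J13_self_eq_zero
    · simp only [Pi.sub_apply, Pi.smul_apply, smul_eq_mul]; ring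
    · simp [hvv, hvw, hwv, hww]
  refine ⟨w 0 / v 0, ?_⟩
  rw [sub_eq_zero, eq_comm] at hu
  rw [div_eq_inv_mul, mul_smul, ← hu, smul_smul, inv_mul_cancel₀ hv0, one_smul]

theorem exists_eq_smul_of_mem_maxGenEigenspace_of_re_pos {X : Matrix (Fin 4) (Fin 4) ℂ}
    (hX : Xᴴ * J13 + J13 * X = 0) {a b : ℂ} (ha : 0 < a.re) (hb : 0 < b.re) {v w : Fin 4 → ℂ}
    (hv : v ∈ maxGenEigenspace (toLin' X) a) (hw : w ∈ maxGenEigenspace (toLin' X) b)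
    (hv0 : v ≠ 0) : ∃ c : ℂ, w = c • v := by
  have hne {x y : ℂ} (hx : 0 < x.re) (hy : 0 < y.re) : star x + y ≠ 0 := fun h ↦ by
    have := congrArg Complex.re h
    simp only [Complex.add_re, Complex.star_def, Complex.conj_re, Complex.zero_re] at this
    linarith
  have hform := hermForm_toLin'_add_eq_zero hX
  exact exists_eq_smul_of_hermForm_J13_eq_zero hv0
    (sesq_eq_zero_of_mem_maxGenEigenspace _ hform (hne ha ha) hv hv)
    (sesq_eq_zero_of_mem_maxGenEigenspace _ hform (hne ha hb) hv hw)
    (sesq_eq_zero_of_mem_maxGenEigenspace _ hform (hne hb ha) hw hv)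
    (sesq_eq_zero_of_mem_maxGenEigenspace _ hform (hne hb hb) hw hw)

theorem false_of_re_pos_of_mem_maxGenEigenspace_inf {A₁ A₂ : Matrix (Fin 4) (Fin 4) ℂ}
    (hA₁ : A₁ ∈ su13) (hA₂ : A₂ ∈ su13) (hA : Commute A₁ A₂) (s t : ℝ) {α β α' β' : ℂ}
    {v w : Fin 4 → ℂ}
    (hv : v ∈ maxGenEigenspace (toLin' A₁) α ⊓ maxGenEigenspace (toLin' A₂) β)
    (hw : w ∈ maxGenEigenspace (toLin' A₁) α' ⊓ maxGenEigenspace (toLin' A₂) β')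
    (hv₀ : v ≠ 0) (hw₀ : w ≠ 0) (hα : α ≠ α')
    (hpos : 0 < s * α.re + t * β.re) (hpos' : 0 < s * α'.re + t * β'.re) : False := by
  have hX : s • A₁ + t • A₂ ∈ su13 := add_mem (su13.smul_mem s hA₁) (su13.smul_mem t hA₂)
  have hskew : ((s : ℂ) • A₁ + (t : ℂ) • A₂)ᴴ * J13 + J13 * ((s : ℂ) • A₁ + (t : ℂ) • A₂) = 0 := by
    rw [Complex.coe_smul, Complex.coe_smul]
    exact hX.1
  have hcomm : Commute (toLin' A₁) (toLin' A₂) := hA.map toLinAlgEquiv'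
  have hlin : toLin' ((s : ℂ) • A₁ + (t : ℂ) • A₂) = (s : ℂ) • toLin' A₁ + (t : ℂ) • toLin' A₂ := by
    rw [map_add, map_smul, map_smul]
  have hre (a b : ℂ) : ((s : ℂ) * a + t * b).re = s * a.re + t * b.re := by simp
  have hv' := mem_maxGenEigenspace_smul_add_smul hcomm hv (s : ℂ) t
  have hw' := mem_maxGenEigenspace_smul_add_smul hcomm hw (s : ℂ) t
  rw [← hlin] at hv' hw'
  obtain ⟨c, rfl⟩ := exists_eq_smul_of_mem_maxGenEigenspace_of_re_pos hskew
    (by rwa [hre]) (by rwa [hre]) hv' hw' hv₀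
  exact hw₀ (Submodule.disjoint_def.mp (disjoint_genEigenspace (toLin' A₁) hα ⊤ ⊤) _
    (Submodule.smul_mem _ c hv.1) hw.1)

theorem exists_mem_maxGenEigenspace_inf_re_ne_zero_re_eq_zero {A₁ A₂ B : Matrix (Fin 4) (Fin 4) ℂ}
    (hA₁ : A₁ ∈ su13) (hA₂ : A₂ ∈ su13) (hA : Commute A₁ A₂) (h₁ : ⁅A₁, B⁆ = (2 : ℂ) • B)
    (h₂ : Commute A₂ B) (hB : B ≠ 0) :
    ∃ α β, α.re ≠ 0 ∧ β.re = 0 ∧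
      ∃ v ∈ maxGenEigenspace (toLin' A₁) α ⊓ maxGenEigenspace (toLin' A₂) β, v ≠ 0 := by
  have hlie : ⁅toLin' A₁, toLin' B⁆ = (2 : ℂ) • toLin' B := by
    have h := congrArg toLinAlgEquiv' h₁
    rw [Ring.lie_def, map_sub, map_mul, map_mul, map_smul] at h
    exact h
  obtain ⟨α, β, v, hv, hBv, hBv₀⟩ := exists_mem_maxGenEigenspace_inf_of_lie_eq_smul
    (hA.map toLinAlgEquiv') hlie (h₂.map toLinAlgEquiv') (by simpa using hB)
  have hv₀ : v ≠ 0 := by rintro rfl; simp at hBv₀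
  have hα : α ≠ α + 2 := fun h ↦ by simpa using congrArg Complex.re h
  have hβ : β.re = 0 := by
    by_contra hβ
    exact false_of_re_pos_of_mem_maxGenEigenspace_inf hA₁ hA₂ hA 0 β.re hv hBv hv₀ hBv₀ hα
      (by simpa using mul_self_pos.mpr hβ) (by simpa using mul_self_pos.mpr hβ)
  by_cases hαre : α.re = 0
  · exact ⟨α + 2, β, by simp [hαre], hβ, _, hBv, hBv₀⟩
  · exact ⟨α, β, hαre, hβ, v, hv, hv₀⟩

/-- The pattern behind real rank at least two: `e₁`, `e₂` are root vectors for the linearly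
independent roots `(2, 0)` and `(0, 2)` of the commuting pair `(h₁, h₂)`. -/
def HasTwoIndependentRoots (R L : Type*) [CommRing R] [LieRing L] [LieAlgebra R L] : Prop :=
  ∃ h₁ h₂ e₁ e₂ : L, ⁅h₁, h₂⁆ = 0 ∧ ⁅h₁, e₁⁆ = (2 : R) • e₁ ∧ ⁅h₂, e₁⁆ = 0 ∧
    ⁅h₁, e₂⁆ = 0 ∧ ⁅h₂, e₂⁆ = (2 : R) • e₂ ∧ e₁ ≠ 0 ∧ e₂ ≠ 0

theorem HasTwoIndependentRoots.of_injective {R L L' : Type*} [CommRing R] [LieRing L]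
    [LieAlgebra R L] [LieRing L'] [LieAlgebra R L'] (h : HasTwoIndependentRoots R L)
    (f : L →ₗ⁅R⁆ L') (hf : Function.Injective f) : HasTwoIndependentRoots R L' := by
  obtain ⟨h₁, h₂, e₁, e₂, hh, h₁₁, h₂₁, h₁₂, h₂₂, he₁, he₂⟩ := h
  refine ⟨f h₁, f h₂, f e₁, f e₂, ?_, ?_, ?_, ?_, ?_, ?_, ?_⟩ <;>
    simp only [← f.map_lie, hh, h₁₁, h₂₁, h₁₂, h₂₂, map_zero, map_smul, ne_eq,
      map_eq_zero_iff f hf, he₁, he₂, not_false_eq_true]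

theorem hasTwoIndependentRoots_sp4 : HasTwoIndependentRoots ℝ sp4 := by
  refine ⟨⟨!![1, 0, 0, 0; 0, 0, 0, 0; 0, 0, -1, 0; 0, 0, 0, 0], ?_⟩,
    ⟨!![0, 0, 0, 0; 0, 1, 0, 0; 0, 0, 0, 0; 0, 0, 0, -1], ?_⟩,
    ⟨!![0, 0, 1, 0; 0, 0, 0, 0; 0, 0, 0, 0; 0, 0, 0, 0], ?_⟩,
    ⟨!![0, 0, 0, 0; 0, 0, 0, 1; 0, 0, 0, 0; 0, 0, 0, 0], ?_⟩, ?_, ?_, ?_, ?_, ?_, ?_, ?_⟩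
  iterate 4
    change _ * Omega + Omega * _ = 0
    ext i j; fin_cases i <;> fin_cases j <;> simp [Omega, Matrix.mul_apply, Fin.sum_univ_four]
  iterate 5
    ext1
    simp only [LieSubalgebra.coe_bracket, SetLike.val_smul, Ring.lie_def, ZeroMemClass.coe_zero]
    ext i j; fin_cases i <;> fin_cases j <;> norm_num [Matrix.mul_apply, Fin.sum_univ_four]
  all_goals rw [ne_eq, ← LieSubalgebra.coe_zero_iff_zero]; intro h
  · simpa using congrFun₂ h 0 2
  · simpa using congrFun₂ h 1 3

theorem not_hasTwoIndependentRoots_su13 : ¬ HasTwoIndependentRoots ℝ su13 := by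
  rintro ⟨h₁, h₂, e₁, e₂, hh, h₁₁, h₂₁, h₁₂, h₂₂, he₁, he₂⟩
  have hcomm {x y : su13} (h : ⁅x, y⁆ = 0) : Commute (x : M4) y :=
    commute_iff_lie_eq.mpr (by rw [← LieSubalgebra.coe_bracket, h, ZeroMemClass.coe_zero])
  have hroot {x y : su13} (h : ⁅x, y⁆ = (2 : ℝ) • y) :
      ⁅(x : M4), (y : M4)⁆ = (2 : ℂ) • (y : M4) := by
    rw [← LieSubalgebra.coe_bracket, h, SetLike.val_smul, ← Complex.coe_smul, Complex.ofReal_ofNat]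
  obtain ⟨p, q, hp, hq, P, hP, hP₀⟩ := exists_mem_maxGenEigenspace_inf_re_ne_zero_re_eq_zero
    h₁.2 h₂.2 (hcomm hh) (hroot h₁₁) (hcomm h₂₁) (by simpa using he₁)
  obtain ⟨q', p', hq', hp', Q, hQ, hQ₀⟩ := exists_mem_maxGenEigenspace_inf_re_ne_zero_re_eq_zero
    h₂.2 h₁.2 (hcomm hh).symm (hroot h₂₂) (hcomm h₁₂) (by simpa using he₂)
  exact false_of_re_pos_of_mem_maxGenEigenspace_inf h₁.2 h₂.2 (hcomm hh) p.re q'.re hP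
    ⟨hQ.2, hQ.1⟩ hP₀ hQ₀ (by rintro rfl; exact hp hp')
    (by simpa [hq] using mul_self_pos.mpr hp) (by simpa [hp'] using mul_self_pos.mpr hq')

/-- There is no injective homomorphism of real Lie algebras from `sp(4,ℝ)` into `su(1,3)`. -/
theorem no_injective_hom_sp4R_su13 :
    ¬ ∃ f : sp4 →ₗ⁅ℝ⁆ su13, Function.Injective f := by
  rintro ⟨f, hf⟩
  exact not_hasTwoIndependentRoots_su13 (hasTwoIndependentRoots_sp4.of_injective f hf)

end
end

section
/- Let 𝔥 be a Lie subalgebra over ℝ of sl(2,ℂ)_ℝ with dim_ℝ 𝔥 = 4. Then 𝔥 is conjugate to the realification of the Borel subalgebra: there exists g ∈ SL(2,ℂ) such that 𝔥 = {g X g⁻¹ : X ∈ 𝔟_ℝ}, where 𝔟_ℝ := {[[b,a],[0,−b]] : a,b ∈ ℂ}. -/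
open Matrix Complex

attribute [local instance 100] LieRing.ofAssociativeRing

noncomputable section

abbrev M2 : Type := Matrix (Fin 2) (Fin 2) ℂ

/-- `sl(2,ℂ)` regarded as a Lie algebra over `ℝ` (the realification `sl(2,ℂ)_ℝ`). -/
def sl2cR : LieSubalgebra ℝ M2 where
  carrier := {X | X.trace = 0}
  add_mem' := by
    intro X Y hX hY
    simp only [Set.mem_setOf_eq] at *
    rw [Matrix.trace_add, hX, hY, add_zero]
  zero_mem' := by simp
  smul_mem' := by
    intro c X hX
    simp only [Set.mem_setOf_eq] at *
    rw [Matrix.trace_smul, hX, smul_zero]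
  lie_mem' := by
    intro X Y _ _
    simp only [Set.mem_setOf_eq]
    rw [Ring.lie_def, Matrix.trace_sub, Matrix.trace_mul_comm, sub_self]

/-- The realification of the Borel subalgebra of `sl(2,ℂ)`. -/
def borelR : Set M2 := {X | ∃ a b : ℂ, X = !![b, a; 0, -b]}

namespace Sl2Aux

open Module

theorem mem_sl2cR_iff (x : M2) : x ∈ sl2cR ↔ x.trace = 0 := Iff.rfl

/-! ### Generic auxiliary lemmas -/

theorem entry_of_eq {A B : M2} (h : A = B) (i j : Fin 2) : A i j = B i j := by rw [h]

theorem sq_eq_zero_of (X : M2) (ht : X.trace = 0) (hd : X.det = 0) : X * X = 0 := by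
  rw [Matrix.trace_fin_two] at ht
  rw [Matrix.det_fin_two] at hd
  ext i j
  fin_cases i <;> fin_cases j <;>
    simp only [Matrix.mul_apply, Fin.sum_univ_two, Matrix.zero_apply, Fin.isValue,
      Fin.mk_zero, Fin.mk_one]
  · linear_combination X 0 0 * ht - hd
  · linear_combination X 0 1 * ht
  · linear_combination X 1 0 * ht
  · linear_combination X 1 1 * ht - hd

theorem not_common_eigen (e : M2) (ht : e.trace = 0)
    (hE : ∃ l : ℂ, !![0,1;0,0] * e - e * !![0,1;0,0] = l • e)
    (hF : ∃ m : ℂ, !![0,0;1,0] * e - e * !![0,0;1,0] = m • e) : e = 0 := by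
  obtain ⟨l, hE⟩ := hE
  obtain ⟨m, hF⟩ := hF
  rw [Matrix.trace_fin_two] at ht
  have E00 := entry_of_eq hE 0 0
  have E01 := entry_of_eq hE 0 1
  have E10 := entry_of_eq hE 1 0
  have F00 := entry_of_eq hF 0 0
  simp [Matrix.sub_apply, Matrix.mul_apply, Fin.sum_univ_two, Matrix.smul_apply,
    Matrix.vecMul, dotProduct, Matrix.vecHead, Matrix.vecTail] at E00 E01 E10 F00
  have h10 : e 1 0 = 0 := by
    rcases E10 with h | h
    · rw [h, zero_mul] at E00; exact E00
    · exact h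
  have h00 : e 0 0 = 0 := by
    rcases E10 with h | h
    · rw [h, zero_mul] at E01
      linear_combination (ht - E01) / 2
    · rw [h10] at E00
      rcases mul_eq_zero.1 E00.symm with h' | h'
      · rw [h', zero_mul] at E01
        linear_combination (ht - E01) / 2
      · exact h'
  have h11 : e 1 1 = 0 := by linear_combination ht - h00
  have h01 : e 0 1 = 0 := by
    rw [h00, mul_zero] at F00
    linear_combination -F00
  ext i j
  fin_cases i <;> fin_cases j <;> simp_all

/-! ### The trace linear map and dimension of `sl2cR` -/

def traceLM : M2 →ₗ[ℝ] ℂ := (Matrix.traceLinearMap (Fin 2) ℂ ℂ).restrictScalars ℝ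

theorem traceLM_surj : Function.Surjective traceLM := by
  intro c
  refine ⟨!![c, 0; 0, 0], ?_⟩
  simp [traceLM, Matrix.trace_fin_two]

theorem finrank_M2 : finrank ℝ M2 = 8 := by
  rw [Module.finrank_matrix]; simp [Complex.finrank_real_complex]

theorem finrank_ker_traceLM : finrank ℝ (LinearMap.ker traceLM) = 6 := by
  have h := LinearMap.finrank_range_add_finrank_ker traceLM
  rw [LinearMap.range_eq_top.mpr traceLM_surj] at h
  rw [finrank_top, Complex.finrank_real_complex] at h
  have h8 := finrank_M2
  omega

theorem sl2_eq_ker : (sl2cR : Submodule ℝ M2) = LinearMap.ker traceLM := by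
  ext x
  rw [LieSubalgebra.mem_toSubmodule, LinearMap.mem_ker]
  exact Iff.rfl

theorem finrank_sl2 : finrank ℝ (sl2cR : Submodule ℝ M2) = 6 := by
  rw [sl2_eq_ker]; exact finrank_ker_traceLM

/-! ### Multiplication by `I` -/

def J : M2 ≃ₗ[ℝ] M2 where
  toFun x := I • x
  invFun x := (-I) • x
  map_add' := by intros; simp [smul_add]
  map_smul' := fun r x => by simp only [RingHom.id_apply]; exact smul_comm I r x
  left_inv := by intro x; simp [smul_smul]
  right_inv := by intro x; simp [smul_smul]

theorem real_smul_M2 (r : ℝ) (x : M2) : r • x = (r : ℂ) • x := (algebraMap_smul ℂ r x).symm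

def complexify (K : Submodule ℝ M2) (h : ∀ x ∈ K, I • x ∈ K) : Submodule ℂ M2 where
  carrier := K
  add_mem' := fun ha hb => K.add_mem ha hb
  zero_mem' := K.zero_mem
  smul_mem' := by
    intro c x hx
    have : c • x = c.re • x + c.im • (I • x) := by
      rw [real_smul_M2, real_smul_M2, smul_smul, ← add_smul, Complex.re_add_im]
    rw [this]
    exact K.add_mem (K.smul_mem _ hx) (K.smul_mem _ (h x hx))

theorem mem_complexify {K : Submodule ℝ M2} {h} {x : M2} :
    x ∈ complexify K h ↔ x ∈ K := Iff.rfl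

theorem finrank_complexify (K : Submodule ℝ M2) (h : ∀ x ∈ K, I • x ∈ K) :
    finrank ℝ K = 2 * finrank ℂ (complexify K h) := by
  have heq : K = (complexify K h).restrictScalars ℝ := by ext x; rfl
  rw [(LinearEquiv.ofEq _ _ heq).finrank_eq]
  have := Module.finrank_mul_finrank ℝ ℂ (complexify K h)
  rw [Complex.finrank_real_complex] at this
  exact this.symm

/-! ### `𝔥` is invariant under multiplication by `I` -/

theorem I_invariant (𝔥 : LieSubalgebra ℝ M2) (hle : 𝔥 ≤ sl2cR)
    (hdim : finrank ℝ 𝔥 = 4) : ∀ x ∈ 𝔥, I • x ∈ 𝔥 := by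
  classical
  set S : Submodule ℝ M2 := (𝔥 : Submodule ℝ M2) with hS
  set T : Submodule ℝ M2 := S.map J.toLinearMap with hT
  have memS : ∀ x : M2, x ∈ S ↔ x ∈ 𝔥 := fun x => 𝔥.mem_toSubmodule
  have memT : ∀ x : M2, x ∈ T ↔ ∃ y ∈ 𝔥, I • y = x := by
    intro x
    simp only [hT, Submodule.mem_map]
    constructor
    · rintro ⟨y, hy, rfl⟩; exact ⟨y, (memS y).1 hy, rfl⟩
    · rintro ⟨y, hy, rfl⟩; exact ⟨y, (memS y).2 hy, rfl⟩
  have hSfin : finrank ℝ S = 4 := hdim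
  have hTfin : finrank ℝ T = 4 := by
    rw [hT, LinearEquiv.finrank_map_eq J S]; exact hSfin
  by_contra hcon
  push_neg at hcon
  obtain ⟨x₀, hx₀, hx₀I⟩ := hcon
  -- the intersection K
  set K : Submodule ℝ M2 := S ⊓ T with hK
  have hKI : ∀ x ∈ K, I • x ∈ K := by
    rintro x ⟨hxS, hxT⟩
    constructor
    · obtain ⟨y, hy, rfl⟩ := (memT x).1 hxT
      have : I • I • y = -y := by
        rw [smul_smul, Complex.I_mul_I, neg_smul, one_smul]
      rw [this]
      exact (memS _).2 (neg_mem hy)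
    · exact (memT _).2 ⟨x, (memS x).1 hxS, rfl⟩
  -- S ⊔ T is contained in sl2
  have hsup_le : S ⊔ T ≤ (sl2cR : Submodule ℝ M2) := by
    refine sup_le ?_ ?_
    · intro x hx
      exact (sl2cR.mem_toSubmodule).2 (hle ((memS x).1 hx))
    · intro x hx
      obtain ⟨y, hy, rfl⟩ := (memT x).1 hx
      have hytr : y.trace = 0 := hle hy
      show (I • y).trace = 0
      rw [Matrix.trace_smul, hytr, smul_zero]
  have hsup_fin : finrank ℝ ↥(S ⊔ T) ≤ 6 := by
    rw [← finrank_sl2]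
    exact Submodule.finrank_mono hsup_le
  have hdimsum := Submodule.finrank_sup_add_finrank_inf_eq S T
  rw [hSfin, hTfin, ← hK] at hdimsum
  have hKge : 2 ≤ finrank ℝ K := by omega
  -- K is a proper subspace of S
  have hKne : K ≠ S := by
    intro h
    apply hx₀I
    have hsub : S ≤ T := by
      intro z hz
      have : z ∈ K := h ▸ hz
      exact this.2
    obtain ⟨y, hy, hyx⟩ := (memT x₀).1 (hsub ((memS x₀).2 hx₀))
    have : I • x₀ = -y := by
      rw [← hyx, smul_smul, Complex.I_mul_I, neg_smul, one_smul]
    rw [this]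
    exact neg_mem hy
  have hKlt : finrank ℝ K < 4 := by
    rw [← hSfin]
    exact Submodule.finrank_lt_finrank_of_lt (lt_of_le_of_ne inf_le_left hKne)
  -- K is a complex line
  have hKc := finrank_complexify K hKI
  have hKc1 : finrank ℂ (complexify K hKI) = 1 := by omega
  have hKfin : finrank ℝ K = 2 := by omega
  -- now S ⊔ T = sl2
  have hsup_eq : S ⊔ T = (sl2cR : Submodule ℝ M2) := by
    apply Submodule.eq_of_le_of_finrank_le hsup_le
    rw [finrank_sl2]; omega
  -- bracket of sl2 with K lands in K
  have claim1 : ∀ s ∈ S, ∀ e ∈ K, s * e - e * s ∈ K := by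
    intro s hs e he
    have hsH : s ∈ 𝔥 := (memS s).1 hs
    have heH : e ∈ 𝔥 := (memS e).1 he.1
    have heI : I • e ∈ 𝔥 := (memS _).1 (hKI e he).1
    have hb : s * e - e * s ∈ 𝔥 := by
      have := 𝔥.lie_mem hsH heH
      rwa [Ring.lie_def] at this
    have hbI : I • (s * e - e * s) = s * (I • e) - (I • e) * s := by
      rw [smul_sub, Matrix.mul_smul, Matrix.smul_mul]
    refine ⟨(memS _).2 hb, (memT _).2 ⟨-(I • (s * e - e * s)), ?_, ?_⟩⟩
    · rw [hbI]
      have := 𝔥.lie_mem hsH heI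
      rw [Ring.lie_def] at this
      exact neg_mem this
    · rw [smul_neg, smul_smul, Complex.I_mul_I, neg_smul, one_smul, neg_neg]
  have claim2 : ∀ z ∈ (sl2cR : Submodule ℝ M2), ∀ e ∈ K, z * e - e * z ∈ K := by
    intro z hz e he
    rw [← hsup_eq] at hz
    obtain ⟨s, hs, t, ht, rfl⟩ := Submodule.mem_sup.1 hz
    obtain ⟨s', hs', rfl⟩ := ht
    have hs'S : s' ∈ S := hs'
    show (s + I • s') * e - e * (s + I • s') ∈ K
    have h1 : s * e - e * s ∈ K := claim1 s hs e he
    have h2 : (I • s') * e - e * (I • s') = I • (s' * e - e * s') := by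
      rw [smul_sub, Matrix.mul_smul, Matrix.smul_mul]
    have h3 : (I • s') * e - e * (I • s') ∈ K := by
      rw [h2]
      exact hKI _ (claim1 s' hs'S e he)
    have : (s + I • s') * e - e * (s + I • s') =
        (s * e - e * s) + ((I • s') * e - e * (I • s')) := by noncomm_ring
    rw [this]
    exact K.add_mem h1 h3
  -- pick a nonzero element of K
  have : Nontrivial (complexify K hKI) := by
    apply Module.finrank_pos_iff (R := ℂ) |>.1
    rw [hKc1]; omega
  obtain ⟨e, he⟩ := exists_ne (0 : complexify K hKI)
  have heK : (e : M2) ∈ K := e.2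
  have he0 : (e : M2) ≠ 0 := fun h => he (Subtype.ext h)
  -- K (as complex submodule) is the span of e
  have hspan : complexify K hKI = Submodule.span ℂ {(e : M2)} := by
    symm
    apply Submodule.eq_of_le_of_finrank_le
    · rw [Submodule.span_le, Set.singleton_subset_iff]
      exact e.2
    · rw [hKc1, finrank_span_singleton he0]
  -- contradiction via the eigenvalue computation
  have htr : (e : M2).trace = 0 := hle ((memS _).1 heK.1)
  have hEmem : (!![0,1;0,0] : M2) ∈ (sl2cR : Submodule ℝ M2) := by
    show Matrix.trace _ = 0
    simp [Matrix.trace_fin_two]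
  have hFmem : (!![0,0;1,0] : M2) ∈ (sl2cR : Submodule ℝ M2) := by
    show Matrix.trace _ = 0
    simp [Matrix.trace_fin_two]
  have hEe : ∃ l : ℂ, !![0,1;0,0] * (e : M2) - (e : M2) * !![0,1;0,0] = l • (e : M2) := by
    have := claim2 _ hEmem _ heK
    have hmem : !![0,1;0,0] * (e : M2) - (e : M2) * !![0,1;0,0] ∈ Submodule.span ℂ {(e : M2)} := by
      rw [← hspan]; exact this
    obtain ⟨l, hl⟩ := Submodule.mem_span_singleton.1 hmem
    exact ⟨l, hl.symm⟩
  have hFe : ∃ m : ℂ, !![0,0;1,0] * (e : M2) - (e : M2) * !![0,0;1,0] = m • (e : M2) := by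
    have := claim2 _ hFmem _ heK
    have hmem : !![0,0;1,0] * (e : M2) - (e : M2) * !![0,0;1,0] ∈ Submodule.span ℂ {(e : M2)} := by
      rw [← hspan]; exact this
    obtain ⟨m, hm⟩ := Submodule.mem_span_singleton.1 hmem
    exact ⟨m, hm.symm⟩
  exact he0 (not_common_eigen _ htr hEe hFe)

/-! ### Structure of the complexified subalgebra -/

theorem exists_basis_pair (Hc : Submodule ℂ M2) (h2 : finrank ℂ Hc = 2) :
    ∃ x y : M2, x ∈ Hc ∧ y ∈ Hc ∧
      (∀ a b : ℂ, a • x + b • y = 0 → a = 0 ∧ b = 0) ∧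
      (∀ X ∈ Hc, ∃ a b : ℂ, X = a • x + b • y) := by
  let b : Basis (Fin 2) ℂ Hc := finBasisOfFinrankEq ℂ Hc h2
  refine ⟨(b 0 : M2), (b 1 : M2), (b 0).2, (b 1).2, ?_, ?_⟩
  · intro a c hab
    have hli := b.linearIndependent
    have h0 : a • b 0 + c • b 1 = (0 : Hc) := by
      apply Subtype.ext
      simpa using hab
    have := Fintype.linearIndependent_iff.1 hli ![a, c] ?_
    · exact ⟨this 0, this 1⟩
    · rw [Fin.sum_univ_two]
      simpa using h0
  · intro X hX
    have := b.sum_repr ⟨X, hX⟩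
    rw [Fin.sum_univ_two] at this
    refine ⟨b.repr ⟨X, hX⟩ 0, b.repr ⟨X, hX⟩ 1, ?_⟩
    have := congrArg (Subtype.val) this
    simpa using this.symm

theorem quad_root (a b c : ℂ) (ha : a ≠ 0) : ∃ s : ℂ, a * s ^ 2 + b * s + c = 0 := by
  obtain ⟨r, hr⟩ := IsAlgClosed.exists_pow_nat_eq (k := ℂ) (b ^ 2 - 4 * (a * c)) zero_lt_two
  refine ⟨(-b + r) / (2 * a), ?_⟩
  field_simp
  linear_combination hr

theorem det_pencil (x y : M2) (s : ℂ) :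
    (s • x + y).det = x.det * s ^ 2 +
      (x 0 0 * y 1 1 + y 0 0 * x 1 1 - x 0 1 * y 1 0 - y 0 1 * x 1 0) * s + y.det := by
  simp only [Matrix.det_fin_two, Matrix.add_apply, Matrix.smul_apply, smul_eq_mul]
  ring

theorem exists_nilpotent_pair (x y : M2)
    (hind : ∀ a b : ℂ, a • x + b • y = 0 → a = 0 ∧ b = 0) :
    ∃ n m : M2, n ≠ 0 ∧ n.det = 0 ∧
      (∀ a b : ℂ, ∃ c d : ℂ, a • x + b • y = c • n + d • m) ∧
      (∃ a b : ℂ, n = a • x + b • y) ∧ (∃ a b : ℂ, m = a • x + b • y) := by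
  rcases eq_or_ne x.det 0 with hx | hx
  · refine ⟨x, y, ?_, hx, ?_, ⟨1, 0, by simp⟩, ⟨0, 1, by simp⟩⟩
    · intro h0
      have := (hind 1 0 (by simp [h0])).1
      simp at this
    · intro a b; exact ⟨a, b, rfl⟩
  · obtain ⟨s, hroot⟩ := quad_root x.det
      (x 0 0 * y 1 1 + y 0 0 * x 1 1 - x 0 1 * y 1 0 - y 0 1 * x 1 0) y.det hx
    refine ⟨s • x + y, x, ?_, ?_, ?_, ⟨s, 1, by simp⟩, ⟨1, 0, by simp⟩⟩
    · intro h0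
      have := (hind s 1 (by simpa using h0)).2
      simp at this
    · rw [det_pencil, hroot]
    · intro a b
      refine ⟨b, a - b * s, ?_⟩
      rw [smul_add, smul_smul, sub_smul, mul_smul]
      abel

theorem common_eigenvector (n m : M2) (hn0 : n ≠ 0) (hnn : n * n = 0)
    (hbr : ∃ c d : ℂ, n * m - m * n = c • n + d • m) :
    ∃ v : Fin 2 → ℂ, v ≠ 0 ∧ n.mulVec v = 0 ∧ ∃ μ : ℂ, m.mulVec v = μ • v := by
  obtain ⟨c, d, hbr⟩ := hbr
  have hu : ∃ u : Fin 2 → ℂ, n.mulVec u ≠ 0 := by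
    by_contra h
    push_neg at h
    apply hn0
    ext i j
    have := congrFun (h (Pi.single j 1)) i
    simpa [Matrix.mulVec_single] using this
  obtain ⟨u, hu⟩ := hu
  set v := n.mulVec u with hv
  have hnv : n.mulVec v = 0 := by
    rw [hv, Matrix.mulVec_mulVec, hnn]
    simp
  have hker : LinearMap.ker n.mulVecLin = Submodule.span ℂ {v} := by
    have hle : Submodule.span ℂ {v} ≤ LinearMap.ker n.mulVecLin := by
      rw [Submodule.span_le, Set.singleton_subset_iff]
      simpa [LinearMap.mem_ker] using hnv
    have hrange : 0 < finrank ℂ (LinearMap.range n.mulVecLin) := by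
      rw [Module.finrank_pos_iff]
      exact nontrivial_of_ne ⟨v, ⟨u, rfl⟩⟩ 0 (by intro h; exact hu (congrArg Subtype.val h))
    have hrn := LinearMap.finrank_range_add_finrank_ker n.mulVecLin
    rw [Module.finrank_fintype_fun_eq_card] at hrn
    simp only [Fintype.card_fin] at hrn
    have hsp : finrank ℂ (Submodule.span ℂ ({v} : Set (Fin 2 → ℂ))) = 1 :=
      finrank_span_singleton hu
    have hk1 : finrank ℂ (LinearMap.ker n.mulVecLin) ≤ 1 := by omega
    exact (Submodule.eq_of_le_of_finrank_le hle (by rw [hsp]; exact hk1)).symm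
  refine ⟨v, hu, hnv, ?_⟩
  have key : n.mulVec (m.mulVec v) = d • m.mulVec v := by
    have h1 : (n * m).mulVec v = (m * n).mulVec v + (c • n + d • m).mulVec v := by
      rw [← hbr]; rw [Matrix.sub_mulVec]; abel
    rw [← Matrix.mulVec_mulVec, ← Matrix.mulVec_mulVec] at h1
    rw [h1, hnv]
    simp [Matrix.add_mulVec, Matrix.smul_mulVec, hnv]
  rcases eq_or_ne d 0 with hd | hd
  · rw [hd, zero_smul] at key
    have : m.mulVec v ∈ LinearMap.ker n.mulVecLin := by simpa [LinearMap.mem_ker] using key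
    rw [hker, Submodule.mem_span_singleton] at this
    obtain ⟨μ, hμ⟩ := this
    exact ⟨μ, hμ.symm⟩
  · refine ⟨0, ?_⟩
    have h2 : d • (d • m.mulVec v) = 0 := by
      rw [← key, ← Matrix.mulVec_smul, ← key, Matrix.mulVec_mulVec, hnn]
      simp
    rw [smul_smul, smul_eq_zero] at h2
    rcases h2 with h | h
    · exact absurd (pow_eq_zero_iff (n := 2) (by norm_num) |>.1 (by rw [pow_two]; exact h)) hd
    · rw [h, zero_smul]

/-! ### The Borel subalgebra and conjugation -/

def borelMap : (ℂ × ℂ) →ₗ[ℝ] M2 where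
  toFun p := !![p.2, p.1; 0, -p.2]
  map_add' p q := by
    ext i j
    fin_cases i <;> fin_cases j <;> simp <;> ring
  map_smul' r p := by
    ext i j
    fin_cases i <;> fin_cases j <;> simp [Matrix.smul_apply]

theorem borelMap_inj : Function.Injective borelMap := by
  intro p q h
  have h01 := congrFun (congrFun h 0) 1
  have h00 := congrFun (congrFun h 0) 0
  simp [borelMap] at h01 h00
  exact Prod.ext h01 h00

theorem borelMap_range : (LinearMap.range borelMap : Set M2) = borelR := by
  ext X
  constructor
  · rintro ⟨⟨a, b⟩, rfl⟩
    exact ⟨a, b, rfl⟩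
  · rintro ⟨a, b, rfl⟩
    exact ⟨⟨a, b⟩, rfl⟩

def conjMap (g : M2) : M2 →ₗ[ℝ] M2 where
  toFun X := g * X * g⁻¹
  map_add' X Y := by noncomm_ring
  map_smul' r X := by
    simp only [RingHom.id_apply]
    rw [Matrix.mul_smul, Matrix.smul_mul]

theorem conjMap_inj (g : M2) (hg : g.det = 1) : Function.Injective (conjMap g) := by
  have hu : IsUnit g.det := by rw [hg]; exact isUnit_one
  intro X Y h
  simp only [conjMap, LinearMap.coe_mk, AddHom.coe_mk] at h
  have h2 := congrArg (fun Z => g⁻¹ * Z * g) h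
  simp only [Matrix.mul_assoc] at h2
  rw [Matrix.nonsing_inv_mul g hu] at h2
  simp only [Matrix.mul_one, ← Matrix.mul_assoc] at h2
  rw [Matrix.nonsing_inv_mul g hu] at h2
  simpa using h2

theorem exists_g (v : Fin 2 → ℂ) (hv : v ≠ 0) :
    ∃ g : M2, g.det = 1 ∧ (∀ i, g i 0 = v i) := by
  rcases eq_or_ne (v 0) 0 with h0 | h0
  · have h1 : v 1 ≠ 0 := by
      intro h1
      apply hv
      ext i; fin_cases i <;> simp [h0, h1]
    refine ⟨!![0, -(v 1)⁻¹; v 1, 0], ?_, ?_⟩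
    · rw [Matrix.det_fin_two_of]
      field_simp
      norm_num
    · intro i; fin_cases i <;> simp [h0]
  · refine ⟨!![v 0, 0; v 1, (v 0)⁻¹], ?_, ?_⟩
    · rw [Matrix.det_fin_two_of]
      field_simp
      norm_num
    · intro i; fin_cases i <;> simp

theorem conj_mem_borel (g X : M2) (hg : g.det = 1) (ht : X.trace = 0) (v : Fin 2 → ℂ)
    (hcol : ∀ i, g i 0 = v i) (c : ℂ) (hev : X.mulVec v = c • v) :
    ∃ Y ∈ borelR, X = g * Y * g⁻¹ := by
  have hu : IsUnit g.det := by rw [hg]; exact isUnit_one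
  set Y := g⁻¹ * X * g with hY
  have hXgY : X = g * Y * g⁻¹ := by
    rw [hY]
    rw [← Matrix.mul_assoc, ← Matrix.mul_assoc, Matrix.mul_nonsing_inv g hu, Matrix.one_mul,
      Matrix.mul_assoc, Matrix.mul_nonsing_inv g hu, Matrix.mul_one]
  have hYtr : Y.trace = 0 := by
    rw [hY, Matrix.trace_mul_comm (g⁻¹ * X) g, ← Matrix.mul_assoc,
      Matrix.mul_nonsing_inv g hu, Matrix.one_mul, ht]
  have hXg : ∀ i, (X * g) i 0 = c * g i 0 := by
    intro i
    have h1 : (X * g) i 0 = (X.mulVec v) i := by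
      simp only [Matrix.mul_apply, Matrix.mulVec, dotProduct, Fin.sum_univ_two, hcol]
    rw [h1, hev]
    simp [hcol]
  have hY10 : Y 1 0 = 0 := by
    have h1 : Y 1 0 = (g⁻¹ * (X * g)) 1 0 := by rw [hY, Matrix.mul_assoc]
    have h2 : (g⁻¹ * (X * g)) 1 0 = c * (g⁻¹ * g) 1 0 := by
      simp only [Matrix.mul_apply, Fin.sum_univ_two, hXg]
      ring
    rw [h1, h2, Matrix.nonsing_inv_mul g hu]
    simp
  refine ⟨Y, ⟨Y 0 1, Y 0 0, ?_⟩, hXgY⟩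
  rw [Matrix.trace_fin_two] at hYtr
  ext i j
  fin_cases i <;> fin_cases j <;>
    simp [hY10]
  linear_combination hYtr

end Sl2Aux

/-- Every 4-dimensional real Lie subalgebra of `sl(2,ℂ)_ℝ` is conjugate, by an element of
`SL(2,ℂ)`, to the realified Borel subalgebra. -/
theorem subalgebra_sl2cR_dim_four_conjugate_borel (𝔥 : LieSubalgebra ℝ M2)
    (hle : 𝔥 ≤ sl2cR) (hdim : Module.finrank ℝ 𝔥 = 4) :
    ∃ g : M2, g.det = 1 ∧ (𝔥 : Set M2) = (fun X => g * X * g⁻¹) '' borelR := by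
  classical
  open Module Sl2Aux in
  have hI := Sl2Aux.I_invariant 𝔥 hle hdim
  have hI' : ∀ x ∈ (𝔥 : Submodule ℝ M2), I • x ∈ (𝔥 : Submodule ℝ M2) := fun x hx =>
    (𝔥.mem_toSubmodule).2 (hI x (𝔥.mem_toSubmodule.1 hx))
  set Hc := Sl2Aux.complexify (𝔥 : Submodule ℝ M2) hI' with hHc
  have memHc : ∀ z : M2, z ∈ Hc ↔ z ∈ 𝔥 := fun z =>
    Iff.trans (Sl2Aux.mem_complexify) 𝔥.mem_toSubmodule
  have hHc2 : Module.finrank ℂ Hc = 2 := by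
    have h2 : Module.finrank ℝ (𝔥 : Submodule ℝ M2) = 2 * Module.finrank ℂ Hc :=
      Sl2Aux.finrank_complexify (𝔥 : Submodule ℝ M2) hI'
    have h4 : Module.finrank ℝ (𝔥 : Submodule ℝ M2) = 4 := hdim
    omega
  obtain ⟨x, y, hx, hy, hind, hdec⟩ := Sl2Aux.exists_basis_pair Hc hHc2
  obtain ⟨n, m, hn0, hndet, hdecnm, hnc, hmc⟩ := Sl2Aux.exists_nilpotent_pair x y hind
  have hnHc : n ∈ Hc := by
    obtain ⟨a, b, rfl⟩ := hnc
    exact Hc.add_mem (Hc.smul_mem a hx) (Hc.smul_mem b hy)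
  have hmHc : m ∈ Hc := by
    obtain ⟨a, b, rfl⟩ := hmc
    exact Hc.add_mem (Hc.smul_mem a hx) (Hc.smul_mem b hy)
  have hnH : n ∈ 𝔥 := (memHc n).1 hnHc
  have hmH : m ∈ 𝔥 := (memHc m).1 hmHc
  have hntr : n.trace = 0 := hle hnH
  have hnn : n * n = 0 := Sl2Aux.sq_eq_zero_of n hntr hndet
  have hbrH : n * m - m * n ∈ 𝔥 := by
    have := 𝔥.lie_mem hnH hmH
    rwa [Ring.lie_def] at this
  have hbr : ∃ c d : ℂ, n * m - m * n = c • n + d • m := by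
    obtain ⟨a, b, hab⟩ := hdec _ ((memHc _).2 hbrH)
    obtain ⟨c, d, hcd⟩ := hdecnm a b
    exact ⟨c, d, by rw [hab, hcd]⟩
  obtain ⟨v, hv0, hnv, μ, hmv⟩ := Sl2Aux.common_eigenvector n m hn0 hnn hbr
  have hall : ∀ X ∈ 𝔥, ∃ c : ℂ, X.mulVec v = c • v := by
    intro X hX
    obtain ⟨a, b, hab⟩ := hdec X ((memHc X).2 hX)
    obtain ⟨c, d, hcd⟩ := hdecnm a b
    refine ⟨d * μ, ?_⟩
    rw [hab, hcd, Matrix.add_mulVec, Matrix.smul_mulVec, Matrix.smul_mulVec,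
      hnv, hmv, smul_zero, zero_add, smul_smul]
  obtain ⟨g, hg, hcol⟩ := Sl2Aux.exists_g v hv0
  refine ⟨g, hg, ?_⟩
  set Bsub : Submodule ℝ M2 :=
    (LinearMap.range Sl2Aux.borelMap).map (Sl2Aux.conjMap g) with hBsub
  have hBfin : Module.finrank ℝ Bsub = 4 := by
    have hinj : Function.Injective ⇑(Sl2Aux.conjMap g ∘ₗ Sl2Aux.borelMap) :=
      fun a b h => Sl2Aux.borelMap_inj (Sl2Aux.conjMap_inj g hg h)
    rw [hBsub, ← LinearMap.range_comp, LinearMap.finrank_range_of_inj hinj,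
      Module.finrank_prod, Complex.finrank_real_complex]
  have hsub : (𝔥 : Submodule ℝ M2) ≤ Bsub := by
    intro X hX
    have hXH : X ∈ 𝔥 := 𝔥.mem_toSubmodule.1 hX
    obtain ⟨c, hc⟩ := hall X hXH
    obtain ⟨Y, hYB, hXY⟩ := Sl2Aux.conj_mem_borel g X hg (hle hXH) v hcol c hc
    rw [← Sl2Aux.borelMap_range] at hYB
    exact Submodule.mem_map.2 ⟨Y, hYB, hXY.symm⟩
  have heq : (𝔥 : Submodule ℝ M2) = Bsub := by
    apply Submodule.eq_of_le_of_finrank_le hsub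
    rw [hBfin]
    exact le_of_eq hdim.symm
  have hsets : (𝔥 : Set M2) = (Bsub : Set M2) := by
    rw [← heq]
    rfl
  rw [hsets, hBsub, Submodule.map_coe, Sl2Aux.borelMap_range]
  rfl

end
end

section
/- Let 𝔥 be a Lie subalgebra over ℝ of sl(2,ℂ)_ℝ with dim_ℝ 𝔥 = 2. Then there exists g ∈ SL(2,ℂ) such that g⁻¹𝔥g is one of the following: the realified Cartan subalgebra 𝔠_ℝ := {diag(a,−a) : a ∈ ℂ}; the realified nilpotent subalgebra 𝔫_ℝ := {[[0,a],[0,0]] : a ∈ ℂ}; or the solvable subalgebra sol₂ := ℝ-span of {diag(1,−1), [[0,1],[0,0]]}. -/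
open Matrix Complex

attribute [local instance 100] LieRing.ofAssociativeRing

noncomputable section

/-- The realified Cartan subalgebra `𝔠_ℝ = {diag(a, −a) : a ∈ ℂ}`. -/
def cartanR : Set M2 := {X | ∃ a : ℂ, X = !![a, 0; 0, -a]}

/-- The realified nilpotent subalgebra `𝔫_ℝ = {[[0,a],[0,0]] : a ∈ ℂ}`. -/
def nilR : Set M2 := {X | ∃ a : ℂ, X = !![0, a; 0, 0]}

/-- The solvable subalgebra `sol₂`: the real span of `diag(1,−1)` and `[[0,1],[0,0]]`. -/
def sol2 : Set M2 :=
  ↑(Submodule.span ℝ ({!![1, 0; 0, -1], !![0, 1; 0, 0]} : Set M2))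

/-! A nonzero traceless `X = [[p, q], [r, -p]]` has centralizer `ℂ X` in `sl(2,ℂ)`: for traceless
matrices the commutator vanishes exactly when the vectors `(p, q, r)` are proportional (it is their
cross product). So an abelian `𝔥` is a complex line `ℂ X`, and the Jordan form of `X` turns it
into `𝔠_ℝ` (`det X ≠ 0`) or `𝔫_ℝ` (`X` nilpotent). A non-abelian 2-dimensional Lie algebra has a
basis `W, Z` with `[W, Z] = 2 Z`; then `tr Z = tr Z² = 0`, so `Z` is nilpotent and conjugate to
`e = [[0, 1], [0, 0]]`, and the relation forces `W` to become `h + b e` with `h = diag(1, -1)`,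
which a unipotent conjugation fixing `e` turns into `h`. -/

namespace LieAlgebra

variable {K L : Type*} [Field K] [LieRing L] [LieAlgebra K L]

theorem linearIndependent_pair_of_lie_ne_zero {x y : L} (h : ⁅x, y⁆ ≠ 0) :
    LinearIndependent K ![x, y] := by
  refine LinearIndependent.pair_iff.mpr fun s t hst => ⟨?_, ?_⟩
  · have : s • ⁅x, y⁆ = 0 := by simpa using congrArg (⁅·, y⁆) hst
    exact (smul_eq_zero.mp this).resolve_right h
  · have : t • ⁅x, y⁆ = 0 := by simpa using congrArg (⁅x, ·⁆) hst
    exact (smul_eq_zero.mp this).resolve_right h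

theorem span_pair_eq_top_of_lie_ne_zero (hL : Module.finrank K L = 2) {x y : L}
    (h : ⁅x, y⁆ ≠ 0) : Submodule.span K {x, y} = ⊤ := by
  rw [← Matrix.range_cons_cons_empty x y ![]]
  exact (linearIndependent_pair_of_lie_ne_zero h).span_eq_top_of_card_eq_finrank (by simp [hL])

theorem exists_lie_eq_smul_of_finrank_eq_two (hL : Module.finrank K L = 2)
    (hna : ¬IsLieAbelian L) {c : K} (hc : c ≠ 0) :
    ∃ W Z : L, Z ≠ 0 ∧ ⁅W, Z⁆ = c • Z ∧ Submodule.span K {W, Z} = ⊤ := by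
  obtain ⟨x, y, hxy⟩ : ∃ x y : L, ⁅x, y⁆ ≠ 0 := by
    by_contra! h
    exact hna ⟨fun x y => h x y⟩
  obtain ⟨α, β, hαβ⟩ : ∃ α β : K, α • x + β • y = ⁅x, y⁆ := by
    rw [← Submodule.mem_span_pair, span_pair_eq_top_of_lie_ne_zero hL hxy]
    exact Submodule.mem_top
  obtain ⟨W, hW⟩ : ∃ W : L, ⁅W, ⁅x, y⁆⁆ = c • ⁅x, y⁆ := by
    by_cases hβ : β = 0
    · have hα : α ≠ 0 := by
        rintro rfl
        exact hxy (by simp [← hαβ, hβ])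
      refine ⟨-(c / α) • y, ?_⟩
      conv_lhs => rw [← hαβ, hβ]
      rw [zero_smul, add_zero, smul_lie, lie_smul, smul_smul, ← lie_skew x y, smul_neg, neg_mul,
        neg_smul, div_mul_cancel₀ _ hα]
    · refine ⟨(c / β) • x, ?_⟩
      conv_lhs => rw [← hαβ]
      rw [smul_lie, lie_add, lie_smul, lie_smul, lie_self, smul_zero, zero_add, smul_smul,
        div_mul_cancel₀ _ hβ]
  have hWZ : ⁅W, ⁅x, y⁆⁆ ≠ 0 := by rw [hW]; exact smul_ne_zero hc hxy
  exact ⟨W, ⁅x, y⁆, hxy, hW, span_pair_eq_top_of_lie_ne_zero hL hWZ⟩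

end LieAlgebra

theorem Submodule.coe_eq_range_smul_of_subset {K F V : Type*} [Field K] [Field F] [Algebra K F]
    [FiniteDimensional K F] [AddCommGroup V] [Module K V] [Module F V] [IsScalarTower K F V]
    {p : Submodule K V} (hp : Module.finrank K p = Module.finrank K F) {v : V}
    (h : (p : Set V) ⊆ Set.range fun c : F => c • v) :
    (p : Set V) = Set.range fun c : F => c • v := by
  let f : F →ₗ[K] V := (LinearMap.toSpanSingleton F V v).restrictScalars K
  have hle : p ≤ LinearMap.range f := h
  have := Submodule.eq_of_le_of_finrank_le hle (hp ▸ LinearMap.finrank_range_le f)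
  rw [this]
  rfl

theorem Matrix.exists_smul_eq_of_commute {K : Type*} [Field K] [NeZero (2 : K)]
    {X Y : Matrix (Fin 2) (Fin 2) K} (hX : X.trace = 0) (hY : Y.trace = 0) (hX0 : X ≠ 0)
    (h : Commute X Y) : ∃ c : K, c • X = Y := by
  obtain ⟨p, q, r, s, rfl⟩ : ∃ p q r s, X = !![p, q; r, s] := ⟨_, _, _, _, X.eta_fin_two⟩
  obtain ⟨u, v, w, t, rfl⟩ : ∃ u v w t, Y = !![u, v; w, t] := ⟨_, _, _, _, Y.eta_fin_two⟩
  rw [trace_fin_two_of] at hX hY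
  obtain rfl : s = -p := by linear_combination hX
  obtain rfl : t = -u := by linear_combination hY
  have h2 : (2 : K) ≠ 0 := two_ne_zero
  have hXY := h.eq
  simp only [mul_fin_two, EmbeddingLike.apply_eq_iff_eq, vecCons_inj, and_true] at hXY
  obtain ⟨⟨e00, e01⟩, e10, -⟩ := hXY
  have hpv : p * v = q * u := mul_left_cancel₀ h2 (by linear_combination e01)
  have hpw : p * w = r * u := mul_left_cancel₀ h2 (by linear_combination -e10)
  have hqw : q * w = r * v := by linear_combination e00
  by_cases hp : p = 0
  · subst hp
    by_cases hq : q = 0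
    · subst hq
      have hr : r ≠ 0 := by rintro rfl; exact hX0 (by ext i j; fin_cases i <;> fin_cases j <;> simp)
      refine ⟨w / r, ?_⟩
      ext i j; fin_cases i <;> fin_cases j <;> simp <;> grind
    · refine ⟨v / q, ?_⟩
      ext i j; fin_cases i <;> fin_cases j <;> simp <;> grind
  · refine ⟨u / p, ?_⟩
    ext i j; fin_cases i <;> fin_cases j <;> simp <;> grind

namespace Matrix

section Conj

variable {n K : Type*} [Fintype n] [DecidableEq n] [CommRing K] {g : Matrix n n K}

theorem conj_eq_iff_mul_eq (hg : IsUnit g.det) {X Y : Matrix n n K} :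
    g⁻¹ * X * g = Y ↔ X * g = g * Y := by
  constructor
  · rintro rfl
    rw [← mul_assoc, ← mul_assoc, mul_nonsing_inv _ hg, one_mul]
  · intro h
    rw [mul_assoc, h, nonsing_inv_mul_cancel_left _ _ hg]

theorem conj_mul_conj (hg : IsUnit g.det) (X Y : Matrix n n K) :
    g⁻¹ * X * g * (g⁻¹ * Y * g) = g⁻¹ * (X * Y) * g := by
  simp only [mul_assoc, mul_nonsing_inv_cancel_left _ _ hg]

theorem conj_mul (g h X : Matrix n n K) :
    (g * h)⁻¹ * X * (g * h) = h⁻¹ * (g⁻¹ * X * g) * h := by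
  simp only [mul_inv_rev, mul_assoc]

end Conj

section Field

variable {K : Type*} [Field K]

theorem trace_eq_zero_of_lie_eq_smul {n : Type*} [Fintype n] {W Z : Matrix n n K} {c : K}
    (hc : c ≠ 0) (h : W * Z - Z * W = c • Z) : Z.trace = 0 := by
  have : c • Z.trace = 0 := by rw [← trace_smul, ← h, trace_sub, trace_mul_comm, sub_self]
  exact (smul_eq_zero.mp this).resolve_left hc

theorem det_eq_zero_of_lie_eq_smul [NeZero (2 : K)] {W Z : Matrix (Fin 2) (Fin 2) K} {c : K}
    (hc : c ≠ 0) (h : W * Z - Z * W = c • Z) : Z.det = 0 := by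
  have htr := trace_eq_zero_of_lie_eq_smul hc h
  have hsq : (Z * Z).trace = 0 := by
    have : c • (Z * Z).trace = 0 := by
      rw [← trace_smul, ← smul_mul, ← h, sub_mul, trace_sub, trace_mul_comm (W * Z), mul_assoc,
        sub_self]
    exact (smul_eq_zero.mp this).resolve_left hc
  rw [trace_fin_two] at htr hsq
  simp only [mul_apply, Fin.sum_univ_two] at hsq
  have h2 : (2 : K) ≠ 0 := two_ne_zero
  rw [det_fin_two]
  apply mul_left_cancel₀ h2
  linear_combination (Z 0 0 + Z 1 1) * htr - hsq

theorem exists_conj_eq_diag_of_lie_single_eq_two_smul [NeZero (2 : K)]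
    {W : Matrix (Fin 2) (Fin 2) K} (hW : W.trace = 0)
    (h : W * !![0, 1; 0, 0] - !![0, 1; 0, 0] * W = (2 : K) • !![0, 1; 0, 0]) :
    ∃ u, u.det = 1 ∧ u⁻¹ * !![0, 1; 0, 0] * u = !![0, 1; 0, 0] ∧
      u⁻¹ * W * u = !![1, 0; 0, -1] := by
  obtain ⟨p, q, r, s, rfl⟩ : ∃ p q r s, W = !![p, q; r, s] := ⟨_, _, _, _, W.eta_fin_two⟩
  rw [trace_fin_two_of] at hW
  obtain rfl : s = -p := by linear_combination hW
  obtain rfl : r = 0 := by simpa using congrFun (congrFun h 0) 0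
  have hp : p + p = 2 := by simpa using congrFun (congrFun h 0) 1
  obtain rfl : p = 1 := mul_left_cancel₀ (two_ne_zero (α := K)) (by linear_combination hp)
  have hu : IsUnit (!![1, -q / 2; 0, 1] : Matrix (Fin 2) (Fin 2) K).det := by simp
  refine ⟨!![1, -q / 2; 0, 1], by simp, (conj_eq_iff_mul_eq hu).mpr ?_,
    (conj_eq_iff_mul_eq hu).mpr ?_⟩
  all_goals ext i j; fin_cases i <;> fin_cases j <;> simp
  field_simp
  ring

end Field

variable {K : Type*} [Field K] [IsAlgClosed K]

theorem exists_conj_eq_single_of_det_eq_zero {X : Matrix (Fin 2) (Fin 2) K} (htr : X.trace = 0)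
    (hdet : X.det = 0) (hX : X ≠ 0) : ∃ g, g.det = 1 ∧ g⁻¹ * X * g = !![0, 1; 0, 0] := by
  obtain ⟨p, q, r, s, rfl⟩ : ∃ p q r s, X = !![p, q; r, s] := ⟨_, _, _, _, X.eta_fin_two⟩
  rw [trace_fin_two_of] at htr
  rw [det_fin_two_of] at hdet
  obtain rfl : s = -p := by linear_combination htr
  suffices ∃ g : Matrix (Fin 2) (Fin 2) K, g.det = 1 ∧ !![p, q; r, -p] * g = g * !![0, 1; 0, 0] by
    obtain ⟨g, hg, hXg⟩ := this
    exact ⟨g, hg, (conj_eq_iff_mul_eq (hg ▸ isUnit_one)).mpr hXg⟩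
  by_cases hr : r = 0
  · subst hr
    obtain rfl : p = 0 := pow_eq_zero_iff two_ne_zero |>.mp (by linear_combination -hdet)
    have hq : q ≠ 0 := by rintro rfl; exact hX (by ext i j; fin_cases i <;> fin_cases j <;> simp)
    obtain ⟨t, rfl⟩ := IsAlgClosed.exists_pow_nat_eq q two_pos
    have ht : t ≠ 0 := by rintro rfl; simp at hq
    refine ⟨!![t, 0; 0, t⁻¹], by simp [det_fin_two_of, ht], ?_⟩
    ext i j; fin_cases i <;> fin_cases j <;> simp
    field_simp
  · obtain ⟨t, ht⟩ := IsAlgClosed.exists_pow_nat_eq (-r⁻¹) two_pos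
    have ht2 : r * t ^ 2 = -1 := by rw [ht]; field_simp
    refine ⟨!![p * t, t; r * t, 0], by rw [det_fin_two_of]; linear_combination -ht2, ?_⟩
    ext i j; fin_cases i <;> fin_cases j <;> simp <;> grind

theorem exists_conj_eq_smul_diag_of_det_ne_zero [NeZero (2 : K)] {X : Matrix (Fin 2) (Fin 2) K}
    (htr : X.trace = 0) (hdet : X.det ≠ 0) :
    ∃ g, g.det = 1 ∧ ∃ a : K, a ≠ 0 ∧ g⁻¹ * X * g = a • !![1, 0; 0, -1] := by
  obtain ⟨p, q, r, s, rfl⟩ : ∃ p q r s, X = !![p, q; r, s] := ⟨_, _, _, _, X.eta_fin_two⟩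
  rw [trace_fin_two_of] at htr
  rw [det_fin_two_of] at hdet
  obtain rfl : s = -p := by linear_combination htr
  suffices ∃ g : Matrix (Fin 2) (Fin 2) K, g.det = 1 ∧ ∃ a : K, a ≠ 0 ∧
      !![p, q; r, -p] * g = g * !![a, 0; 0, -a] by
    obtain ⟨g, hg, a, ha, hXg⟩ := this
    refine ⟨g, hg, a, ha, (conj_eq_iff_mul_eq (hg ▸ isUnit_one)).mpr ?_⟩
    simpa using hXg
  by_cases hr : r = 0
  · subst hr
    have hp : p ≠ 0 := by rintro rfl; exact hdet (by ring)
    obtain ⟨t, ht⟩ := IsAlgClosed.exists_pow_nat_eq ((2 * p)⁻¹) two_pos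
    have ht2 : 2 * p * t ^ 2 = 1 := by rw [ht]; field_simp
    refine ⟨!![t, -t * q; 0, 2 * t * p], ?_, p, hp, ?_⟩
    · rw [det_fin_two_of]; linear_combination ht2
    · ext i j; fin_cases i <;> fin_cases j <;> simp <;> ring
  · obtain ⟨a, ha⟩ := IsAlgClosed.exists_pow_nat_eq (p ^ 2 + q * r) two_pos
    have ha0 : a ≠ 0 := by rintro rfl; exact hdet (by linear_combination ha)
    obtain ⟨t, ht⟩ := IsAlgClosed.exists_pow_nat_eq ((2 * a * r)⁻¹) two_pos
    have ht2 : 2 * a * r * t ^ 2 = 1 := by rw [ht]; field_simp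
    refine ⟨!![t * (p + a), t * (p - a); t * r, t * r], ?_, a, ha0, ?_⟩
    · rw [det_fin_two_of]; linear_combination ht2
    · ext i j; fin_cases i <;> fin_cases j <;> simp <;> grind

theorem exists_conj_eq_of_lie_eq_two_smul [NeZero (2 : K)] {W Z : Matrix (Fin 2) (Fin 2) K}
    (hW : W.trace = 0) (hZ : Z ≠ 0) (h : W * Z - Z * W = (2 : K) • Z) :
    ∃ g, g.det = 1 ∧ g⁻¹ * Z * g = !![0, 1; 0, 0] ∧ g⁻¹ * W * g = !![1, 0; 0, -1] := by
  obtain ⟨g, hg, hZg⟩ := exists_conj_eq_single_of_det_eq_zero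
    (trace_eq_zero_of_lie_eq_smul two_ne_zero h) (det_eq_zero_of_lie_eq_smul two_ne_zero h) hZ
  have hg' : IsUnit g.det := hg ▸ isUnit_one
  obtain ⟨u, hu, hZu, hWu⟩ := exists_conj_eq_diag_of_lie_single_eq_two_smul (W := g⁻¹ * W * g)
    (by rw [trace_conj' ((isUnit_iff_isUnit_det g).mpr hg'), hW])
    (by rw [← hZg, conj_mul_conj hg', conj_mul_conj hg', ← Matrix.sub_mul, ← Matrix.mul_sub, h,
      Matrix.mul_smul, Matrix.smul_mul])
  exact ⟨g * u, by rw [det_mul, hg, hu, one_mul], by rw [conj_mul, hZg, hZu], by rw [conj_mul, hWu]⟩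

end Matrix

section Conjugation

variable {R A : Type*} [CommSemiring R] [Semiring A] [Algebra R A]

theorem image_mul_mul_span (a b : A) (s : Set A) :
    (fun x => a * x * b) '' (Submodule.span R s : Set A) =
      Submodule.span R ((fun x => a * x * b) '' s) := by
  change LinearMap.mulLeftRight R (a, b) '' _ =
    (Submodule.span R (LinearMap.mulLeftRight R (a, b) '' s) : Set A)
  rw [Submodule.span_image, Submodule.map_coe]

theorem image_mul_mul_range_smul (a b v : A) :
    (fun x => a * x * b) '' Set.range (fun c : R => c • v) =
      Set.range fun c : R => c • (a * v * b) := by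
  rw [← Set.range_comp]
  congr 1
  ext c
  simp

end Conjugation

theorem range_smul_smul_of_ne_zero {F V : Type*} [GroupWithZero F] [MulAction F V] {a : F}
    (ha : a ≠ 0) (v : V) : (Set.range fun c : F => c • a • v) = Set.range fun c : F => c • v := by
  simp_rw [smul_smul]
  exact (mul_right_surjective₀ ha).range_comp fun c => c • v

theorem cartanR_eq_range_smul : cartanR = Set.range fun a : ℂ => a • !![1, 0; 0, -1] := by
  ext X
  simp [cartanR, eq_comm]

theorem nilR_eq_range_smul : nilR = Set.range fun a : ℂ => a • !![0, 1; 0, 0] := by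
  ext X
  simp [nilR, eq_comm]

/-- Every 2-dimensional real Lie subalgebra of `sl(2,ℂ)_ℝ` is conjugate, by an element of
`SL(2,ℂ)`, to one of `𝔠_ℝ`, `𝔫_ℝ`, or `sol₂`. -/
theorem subalgebra_sl2cR_dim_two_classification (𝔥 : LieSubalgebra ℝ M2)
    (hle : 𝔥 ≤ sl2cR) (hdim : Module.finrank ℝ 𝔥 = 2) :
    ∃ g : M2, g.det = 1 ∧
      ((fun X => g⁻¹ * X * g) '' (𝔥 : Set M2) = cartanR ∨
       (fun X => g⁻¹ * X * g) '' (𝔥 : Set M2) = nilR ∨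
       (fun X => g⁻¹ * X * g) '' (𝔥 : Set M2) = sol2) := by
  have htr : ∀ X ∈ 𝔥, X.trace = 0 := fun X hX => hle hX
  by_cases hab : IsLieAbelian 𝔥
  · obtain ⟨⟨X, hX⟩, hX0⟩ := Module.finrank_pos_iff_exists_ne_zero.mp (hdim ▸ two_pos)
    replace hX0 : X ≠ 0 := fun h => hX0 (Subtype.ext h)
    have h𝔥 : (𝔥 : Set M2) = Set.range fun c : ℂ => c • X := by
      refine Submodule.coe_eq_range_smul_of_subset (p := 𝔥.toSubmodule)
        (hdim.trans Complex.finrank_real_complex.symm) fun Y hY => ?_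
      refine Matrix.exists_smul_eq_of_commute (htr X hX) (htr Y hY) hX0 ?_
      exact commute_iff_lie_eq.mpr (congrArg Subtype.val (hab.trivial ⟨X, hX⟩ ⟨Y, hY⟩))
    by_cases hdet : X.det = 0
    · obtain ⟨g, hg, hXg⟩ := Matrix.exists_conj_eq_single_of_det_eq_zero (htr X hX) hdet hX0
      refine ⟨g, hg, Or.inr (Or.inl ?_)⟩
      rw [h𝔥, image_mul_mul_range_smul, hXg, nilR_eq_range_smul]
    · obtain ⟨g, hg, a, ha, hXg⟩ := Matrix.exists_conj_eq_smul_diag_of_det_ne_zero (htr X hX) hdet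
      refine ⟨g, hg, Or.inl ?_⟩
      rw [h𝔥, image_mul_mul_range_smul, hXg, range_smul_smul_of_ne_zero ha, cartanR_eq_range_smul]
  · obtain ⟨W, Z, hZ, hWZ, hspan⟩ :=
      LieAlgebra.exists_lie_eq_smul_of_finrank_eq_two hdim hab (two_ne_zero (α := ℝ))
    have h𝔥 : (𝔥 : Set M2) = Submodule.span ℝ ({(W : M2), (Z : M2)} : Set M2) := by
      have := congrArg (Submodule.map 𝔥.toSubmodule.subtype) hspan
      rw [Submodule.map_span, Set.image_pair, Submodule.map_top, Submodule.range_subtype] at this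
      exact congrArg SetLike.coe this.symm
    obtain ⟨g, hg, hZg, hWg⟩ := Matrix.exists_conj_eq_of_lie_eq_two_smul (htr W W.2)
      (fun h => hZ (Subtype.ext h)) (by
        rw [two_smul]; simpa [Ring.lie_def, two_smul] using congrArg Subtype.val hWZ)
    refine ⟨g, hg, Or.inr (Or.inr ?_)⟩
    rw [h𝔥, image_mul_mul_span, Set.image_pair, hWg, hZg]
    rfl

end
end

section
/- There is no Lie subalgebra over ℝ of sl(2,ℂ)_ℝ of real dimension 5. -/
/-
If `𝔥` had real dimension 5 inside the real 6-dimensional `sl(2,ℂ)`, then `𝔥 + i𝔥 ⊆ sl(2,ℂ)`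
forces the complex part `K = 𝔥 ∩ i𝔥` to have complex dimension exactly 2. Since `𝔥` normalizes
`K` and the normalizer is a complex subspace, the normalizer of `K` in `sl(2,ℂ)` has complex
dimension at least `5/2`, hence is all of `sl(2,ℂ)`. So `K` is a proper nonzero ideal of the
simple Lie algebra `sl(2,ℂ)`, which is impossible.
-/

open Matrix Complex

attribute [local instance 100] LieRing.ofAssociativeRing

noncomputable section

namespace Submodule

variable {E : Type*} [AddCommGroup E] [Module ℂ E] [Module ℝ E]

def complexPart (V : Submodule ℝ E) : Submodule ℂ E where
  carrier := {x | ∀ c : ℂ, c • x ∈ V}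
  add_mem' hx hy c := by
    rw [smul_add]
    exact V.add_mem (hx c) (hy c)
  zero_mem' c := by
    rw [smul_zero]
    exact V.zero_mem
  smul_mem' c x hx c' := by
    rw [smul_smul]
    exact hx (c' * c)

variable {V : Submodule ℝ E}

theorem mem_of_mem_complexPart {x : E} (hx : x ∈ V.complexPart) : x ∈ V :=
  one_smul ℂ x ▸ hx 1

variable [IsScalarTower ℝ ℂ E]

theorem mem_complexPart_iff {x : E} : x ∈ V.complexPart ↔ x ∈ V ∧ I • x ∈ V := by
  refine ⟨fun hx => ⟨mem_of_mem_complexPart hx, hx I⟩, fun ⟨hx, hIx⟩ c => ?_⟩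
  have hc : c • x = c.re • x + c.im • I • x := by
    conv_lhs => rw [← re_add_im c]
    rw [add_smul, mul_smul, ← algebraMap_smul ℂ c.re x, ← algebraMap_smul ℂ c.im (I • x)]
    rfl
  rw [hc]
  exact V.add_mem (V.smul_mem _ hx) (V.smul_mem _ hIx)

theorem finrank_restrictScalars_real (W : Submodule ℂ E) :
    Module.finrank ℝ (W.restrictScalars ℝ) = 2 * Module.finrank ℂ W := by
  rw [((restrictScalarsEquiv ℝ ℂ E W).restrictScalars ℝ).finrank_eq,
    ← Module.finrank_mul_finrank ℝ ℂ W, finrank_real_complex]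

theorem finrank_le_two_mul_finrank [FiniteDimensional ℝ E] {W : Submodule ℂ E}
    (hVW : V ≤ W.restrictScalars ℝ) :
    Module.finrank ℝ V ≤ 2 * Module.finrank ℂ W :=
  finrank_restrictScalars_real W ▸ finrank_mono hVW

theorem two_mul_finrank_complexPart_le [FiniteDimensional ℝ E] :
    2 * Module.finrank ℂ V.complexPart ≤ Module.finrank ℝ V :=
  finrank_restrictScalars_real V.complexPart ▸
    finrank_mono (show V.complexPart.restrictScalars ℝ ≤ V from fun _ => mem_of_mem_complexPart)

/-- `V` and `i V` both lie in `W` and they meet in the complex part of `V`. -/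
theorem finrank_le_finrank_add_finrank_complexPart [FiniteDimensional ℝ E]
    {W : Submodule ℂ E} (hVW : V ≤ W.restrictScalars ℝ) :
    Module.finrank ℝ V ≤ Module.finrank ℂ W + Module.finrank ℂ V.complexPart := by
  let mulI : E ≃ₗ[ℝ] E := (LinearEquiv.smulOfNeZero ℂ E I I_ne_zero).restrictScalars ℝ
  let iV := V.map mulI.toLinearMap
  have hiVW : iV ≤ W.restrictScalars ℝ := by
    rintro _ ⟨x, hx, rfl⟩
    exact W.smul_mem I (hVW hx)
  have hinf : V ⊓ iV = V.complexPart.restrictScalars ℝ := by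
    ext x
    rw [restrictScalars_mem, mem_complexPart_iff, mem_inf]
    refine and_congr_right fun _ => ⟨?_, fun hIx => ⟨-(I • x), V.neg_mem hIx, ?_⟩⟩
    · rintro ⟨y, hy, rfl⟩
      show I • I • y ∈ V
      rw [smul_smul, I_mul_I, neg_one_smul]
      exact V.neg_mem hy
    · show I • -(I • x) = x
      rw [smul_neg, smul_smul, I_mul_I, neg_one_smul, neg_neg]
  have hsup := finrank_mono (sup_le hVW hiVW)
  have hdim := finrank_sup_add_finrank_inf_eq V iV
  rw [hinf, mulI.finrank_map_eq, finrank_restrictScalars_real] at hdim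
  rw [finrank_restrictScalars_real] at hsup
  omega

end Submodule

namespace LieSubalgebra

variable {L : Type*} [LieRing L] [LieAlgebra ℂ L] [LieAlgebra ℝ L]
  (𝔥 : LieSubalgebra ℝ L)

theorem lie_mem_complexPart {x y : L} (hx : x ∈ 𝔥) (hy : y ∈ 𝔥.toSubmodule.complexPart) :
    ⁅x, y⁆ ∈ 𝔥.toSubmodule.complexPart := fun c => by
  rw [← lie_smul]
  exact 𝔥.lie_mem hx (hy c)

def complexPart : LieSubalgebra ℂ L :=
  { 𝔥.toSubmodule.complexPart with
    lie_mem' := fun hx hy => 𝔥.lie_mem_complexPart (Submodule.mem_of_mem_complexPart hx) hy }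

theorem mem_normalizer_complexPart {x : L} (hx : x ∈ 𝔥) : x ∈ 𝔥.complexPart.normalizer :=
  (mem_normalizer_iff _ _).2 fun _ hy => 𝔥.lie_mem_complexPart hx hy

end LieSubalgebra

open LieAlgebra.SpecialLinear

theorem LieAlgebra.SpecialLinear.mem_sl_iff {n K : Type*} [DecidableEq n] [Fintype n] [Field K]
    {x : Matrix n n K} : x ∈ sl n K ↔ x.trace = 0 :=
  Iff.rfl

theorem LieAlgebra.SpecialLinear.finrank_sl_add_one (n K : Type*) [DecidableEq n] [Fintype n]
    [Nonempty n] [Field K] :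
    Module.finrank K (sl n K) + 1 = Fintype.card n ^ 2 := by
  have hsurj : Function.Surjective (traceLinearMap n K K) := fun c =>
    ⟨Matrix.single (Classical.arbitrary n) (Classical.arbitrary n) c, trace_single_eq_same _ _⟩
  have := (traceLinearMap n K K).finrank_range_add_finrank_ker
  rw [LinearMap.range_eq_top.2 hsurj, finrank_top, Module.finrank_self,
    Module.finrank_matrix, Module.finrank_self] at this
  rw [← sq, mul_one] at this
  exact (add_comm _ _).trans this

theorem finrank_sl_two : Module.finrank ℂ (sl (Fin 2) ℂ).toSubmodule = 3 := by
  change Module.finrank ℂ (sl (Fin 2) ℂ) = 3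
  simpa using finrank_sl_add_one (Fin 2) ℂ

namespace SlTwo

def e : M2 := !![0, 1; 0, 0]
def f : M2 := !![0, 0; 1, 0]
def h : M2 := !![1, 0; 0, -1]

theorem e_mem : e ∈ sl (Fin 2) ℂ := by simp [mem_sl_iff, e, trace_fin_two]
theorem f_mem : f ∈ sl (Fin 2) ℂ := by simp [mem_sl_iff, f, trace_fin_two]

theorem lie_e_f : ⁅e, f⁆ = h := by
  ext i j; fin_cases i <;> fin_cases j <;> simp [Ring.lie_def, e, f, h]

theorem lie_f_e : ⁅f, e⁆ = (-1 : ℂ) • h := by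
  rw [← lie_skew, lie_e_f, neg_one_smul]

theorem lie_e_h : ⁅e, h⁆ = (-2 : ℂ) • e := by
  ext i j; fin_cases i <;> fin_cases j <;> norm_num [Ring.lie_def, e, h]

theorem lie_f_h : ⁅f, h⁆ = (2 : ℂ) • f := by
  ext i j; fin_cases i <;> fin_cases j <;> norm_num [Ring.lie_def, f, h]

theorem lie_e_lie_e (x : M2) : ⁅e, ⁅e, x⁆⁆ = (-2 * x 1 0) • e := by
  rw [eta_fin_two x]
  ext i j; fin_cases i <;> fin_cases j <;> simp [Ring.lie_def, e]
  ring

theorem lie_f_lie_f (x : M2) : ⁅f, ⁅f, x⁆⁆ = (-2 * x 0 1) • f := by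
  rw [eta_fin_two x]
  ext i j; fin_cases i <;> fin_cases j <;> simp [Ring.lie_def, f]
  ring

theorem eq_smul_h_add_smul_e_add_smul_f {x : M2} (hx : x ∈ sl (Fin 2) ℂ) :
    x = x 0 0 • h + x 0 1 • e + x 1 0 • f := by
  have h11 : x 1 1 = -x 0 0 := by
    rw [mem_sl_iff, trace_fin_two] at hx
    linear_combination hx
  ext i j; fin_cases i <;> fin_cases j <;> simp [e, f, h, h11]

variable {I : Submodule ℂ M2} (hlie : ∀ x ∈ sl (Fin 2) ℂ, ∀ y ∈ I, ⁅x, y⁆ ∈ I)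
include hlie

theorem sl_le_of_h_mem (hh : h ∈ I) : (sl (Fin 2) ℂ).toSubmodule ≤ I := by
  have he : e ∈ I := by
    have := hlie e e_mem h hh
    rwa [lie_e_h, I.smul_mem_iff (by norm_num)] at this
  have hf : f ∈ I := by
    have := hlie f f_mem h hh
    rwa [lie_f_h, I.smul_mem_iff (by norm_num)] at this
  intro x hx
  rw [eq_smul_h_add_smul_e_add_smul_f hx]
  exact I.add_mem (I.add_mem (I.smul_mem _ hh) (I.smul_mem _ he)) (I.smul_mem _ hf)

/-- Applying `ad e` or `ad f` twice to an element of `I` isolates its lower or upper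
off-diagonal entry; an element with neither is a multiple of `h`. -/
theorem h_mem (hI : I ≤ (sl (Fin 2) ℂ).toSubmodule) (hne : I ≠ ⊥) : h ∈ I := by
  obtain ⟨x, hx, hx0⟩ := I.exists_mem_ne_zero_of_ne_bot hne
  by_cases hx10 : x 1 0 = 0
  · by_cases hx01 : x 0 1 = 0
    · have hxh : x = x 0 0 • h := by simpa [hx10, hx01] using eq_smul_h_add_smul_e_add_smul_f (hI hx)
      rw [hxh] at hx hx0
      exact (I.smul_mem_iff (left_ne_zero_of_smul hx0)).1 hx
    · have hf : f ∈ I := by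
        have := hlie f f_mem _ (hlie f f_mem x hx)
        rwa [lie_f_lie_f, I.smul_mem_iff (by simpa using hx01)] at this
      simpa [lie_e_f] using hlie e e_mem f hf
  · have he : e ∈ I := by
      have := hlie e e_mem _ (hlie e e_mem x hx)
      rwa [lie_e_lie_e, I.smul_mem_iff (by simpa using hx10)] at this
    have := hlie f f_mem e he
    rwa [lie_f_e, I.smul_mem_iff (by norm_num)] at this

end SlTwo

/-- There is no 5-dimensional real Lie subalgebra of `sl(2,ℂ)_ℝ`. -/
theorem no_subalgebra_sl2cR_dim_five :
    ¬ ∃ 𝔥 : LieSubalgebra ℝ M2, 𝔥 ≤ sl2cR ∧ Module.finrank ℝ 𝔥 = 5 := by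
  rintro ⟨𝔥, h𝔥, h5⟩
  change Module.finrank ℝ 𝔥.toSubmodule = 5 at h5
  have hK : Module.finrank ℂ 𝔥.toSubmodule.complexPart = 2 := by
    have := Submodule.finrank_le_finrank_add_finrank_complexPart
      (V := 𝔥.toSubmodule) (W := (sl (Fin 2) ℂ).toSubmodule) h𝔥
    have := 𝔥.toSubmodule.two_mul_finrank_complexPart_le
    rw [finrank_sl_two] at *
    omega
  have hN : (sl (Fin 2) ℂ).toSubmodule ≤ 𝔥.complexPart.normalizer.toSubmodule := by
    let N := 𝔥.complexPart.normalizer.toSubmodule ⊓ (sl (Fin 2) ℂ).toSubmodule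
    have := Submodule.finrank_le_two_mul_finrank
      (show 𝔥.toSubmodule ≤ N.restrictScalars ℝ from
        fun _ hx => ⟨𝔥.mem_normalizer_complexPart hx, h𝔥 hx⟩)
    have hN : N = (sl (Fin 2) ℂ).toSubmodule :=
      Submodule.eq_of_le_of_finrank_le inf_le_right (by rw [finrank_sl_two]; omega)
    exact hN ▸ inf_le_left
  have hlie : ∀ x ∈ sl (Fin 2) ℂ, ∀ y ∈ 𝔥.toSubmodule.complexPart,
      ⁅x, y⁆ ∈ 𝔥.toSubmodule.complexPart :=
    fun x hx => (LieSubalgebra.mem_normalizer_iff _ _).1 (hN hx)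
  have hne : 𝔥.toSubmodule.complexPart ≠ ⊥ := fun h => by
    rw [h, finrank_bot] at hK
    omega
  have hK_le : 𝔥.toSubmodule.complexPart ≤ (sl (Fin 2) ℂ).toSubmodule :=
    fun _ hx => h𝔥 (Submodule.mem_of_mem_complexPart hx)
  have := Submodule.finrank_mono (SlTwo.sl_le_of_h_mem hlie (SlTwo.h_mem hlie hK_le hne))
  rw [finrank_sl_two, hK] at this
  omega

end
end
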